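/- arXiv:2411.07659 — 5 statements merged into one kernel-verified Lean document; each statement's English description precedes it below -/
import Mathlib

section
/- Let I ⊆ ℝ be an interval, let f : ℝ → ℝ be continuous and strictly monotone on I, and let g be the inverse of the restriction of f to I, defined on the interval f(I). If the f-potential λ_f is convex on L^c(Ω,I) or concave on L^c(Ω,I), then the g-potential λ_g is convex on L^c(Ω,f(I)) or concave on L^c(Ω,f(I)). -/
/-!
Write `g = f⁻¹` and `M_t(x, y) = f⁻¹(t f(x) + (1 - t) f(y))` for the weighted quasi-arithmetic
mean. Evaluating `λ_f` on functions that take one value on a set `A` with `p = P(A) ∈ (0, 1)` and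
another one off `A` shows that convexity of `λ_f` makes `M_p` jointly convex on `I × I`. From
`M_s(M_t(x, y), y) = M_{st}(x, y)`, `M_{1-t}(x, y) = M_t(y, x)` and the monotonicity of `M_s`, the
weights `t` with `M_t` convex are closed under products and under `t ↦ 1 - t`; starting from `p`
they are dense in `[0, 1]`, so by continuity in `t` every `M_t` is convex.

Since `λ_g(ψ) = f(E[g ∘ ψ])`, Jensen's inequality for `M_a` at the random point `(g ∘ ψ₁, g ∘ ψ₂)`
gives `a λ_g(ψ₁) + (1 - a) λ_g(ψ₂) = f(M_a(E[g ∘ ψ₁], E[g ∘ ψ₂])) ≤ f(E[g(a ψ₁ + (1 - a) ψ₂)])`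
when `f` increases, and the reverse inequality when `f` decreases: `λ_g` is concave, resp. convex.
If `λ_f` is concave instead, `x ↦ f(-x)` on `-I` has the convex potential `φ ↦ -λ_f(-φ)` and the
same `λ_g`.
-/

open MeasureTheory

/-- `L^c(Ω, I)`: measurable functions whose range is contained in a compact subset of `I`. -/
def MemLc {Ω : Type*} [MeasurableSpace Ω] (I : Set ℝ) (φ : Ω → ℝ) : Prop :=
  Measurable φ ∧ ∃ K : Set ℝ, K ⊆ I ∧ IsCompact K ∧ ∀ ω, φ ω ∈ K

/-- The `f`-potential `λ_f(φ) = f⁻¹(∫ f(φ(ω)) dP(ω))`, where `f⁻¹` is the inverse of the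
restriction of `f` to `I`. -/
noncomputable def fPotential {Ω : Type*} [MeasurableSpace Ω] (P : Measure Ω)
    (f : ℝ → ℝ) (I : Set ℝ) (φ : Ω → ℝ) : ℝ :=
  Function.invFunOn f I (∫ ω, f (φ ω) ∂P)

open Set Function Topology

section InvFunOn

variable {α β : Type*} [Nonempty α]

theorem invFunOn_neg_neg [InvolutiveNeg β] (f : α → β) (s : Set α) (b : β) :
    invFunOn (-f) s (-b) = invFunOn f s b := by
  have hp : (fun a => a ∈ s ∧ (-f) a = -b) = fun a => a ∈ s ∧ f a = b := by
    funext a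
    simp
  unfold invFunOn
  rw [hp]

theorem Set.EqOn.invFunOn_eq {f f' : α → β} {s : Set α} (h : EqOn f f' s) :
    invFunOn f s = invFunOn f' s := by
  funext b
  have hp : (fun a => a ∈ s ∧ f a = b) = fun a => a ∈ s ∧ f' a = b :=
    funext fun a => propext (and_congr_right fun ha => by rw [h ha])
  unfold invFunOn
  rw [hp]

theorem Set.InjOn.invFunOn_invFunOn [Nonempty β] {f : α → β} {s : Set α} (hinj : InjOn f s)
    {x : α} (hx : x ∈ s) : invFunOn (invFunOn f s) (f '' s) x = f x := by
  have h := (invFunOn_injOn_image f s).leftInvOn_invFunOn (mem_image_of_mem f hx)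
  rwa [hinj.leftInvOn_invFunOn hx] at h

theorem Set.InjOn.invFunOn_comp_neg [InvolutiveNeg α] {f : α → β} {s : Set α} (hinj : InjOn f s)
    {y : β} (hy : y ∈ f '' s) : invFunOn (fun x => f (-x)) (-s) y = -invFunOn f s y := by
  obtain ⟨x, hx, rfl⟩ := hy
  have hinj' : InjOn (fun x => f (-x)) (-s) := fun u hu v hv h => neg_injective (hinj hu hv h)
  have h := hinj'.leftInvOn_invFunOn (show -x ∈ -s by simpa using hx)
  simp only [neg_neg] at h
  rw [h, hinj.leftInvOn_invFunOn hx]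

theorem ContinuousOn.invFunOn_image [TopologicalSpace α] [TopologicalSpace β] [T2Space β]
    {f : α → β} {s K : Set α} (hinj : InjOn f s) (hK : IsCompact K) (hKs : K ⊆ s)
    (hf : ContinuousOn f K) : ContinuousOn (invFunOn f s) (f '' K) := by
  have : CompactSpace K := isCompact_iff_compactSpace.mp hK
  have hemb : IsClosedEmbedding (K.domRestrict f) :=
    (continuousOn_iff_continuous_domRestrict.mp hf).isClosedEmbedding (hinj.mono hKs).injective
  have hmaps : ∀ y : f '' K, invFunOn f s y ∈ K := by
    rintro ⟨_, x, hx, rfl⟩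
    rwa [hinj.leftInvOn_invFunOn (hKs hx)]
  let inv : f '' K → K := fun y => ⟨invFunOn f s y, hmaps y⟩
  have hcomp : K.domRestrict f ∘ inv = Subtype.val := by
    funext ⟨_, x, hx, rfl⟩
    simp [inv, hinj.leftInvOn_invFunOn (hKs hx)]
  have hinv : Continuous inv := hemb.isEmbedding.continuous_iff.mpr (hcomp ▸ continuous_subtype_val)
  exact continuousOn_iff_continuous_domRestrict.mpr (continuous_subtype_val.comp hinv)

end InvFunOn

theorem strictMonoOn_or_strictAntiOn_comp_neg {α β : Type*} [AddCommGroup α] [PartialOrder α]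
    [IsOrderedAddMonoid α] [Preorder β] {f : α → β} {s : Set α}
    (h : StrictMonoOn f s ∨ StrictAntiOn f s) :
    StrictMonoOn (fun x => f (-x)) (-s) ∨ StrictAntiOn (fun x => f (-x)) (-s) :=
  h.symm.imp (fun h _ hx _ hy hxy => h hy hx (neg_lt_neg hxy))
    (fun h _ hx _ hy hxy => h hy hx (neg_lt_neg hxy))

theorem image_comp_neg {α β : Type*} [InvolutiveNeg α] (f : α → β) (s : Set α) :
    (fun x => f (-x)) '' (-s) = f '' s := by
  rw [← image_neg_eq_neg, image_image]
  simp

section Real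

variable {f : ℝ → ℝ} {I : Set ℝ}

theorem Convex.image_of_continuousOn (hI : Convex ℝ I) (hf : ContinuousOn f I) :
    Convex ℝ (f '' I) :=
  (hI.isPreconnected.image f hf).convex

theorem Convex.combo_mem_image (hI : Convex ℝ I) (hf : ContinuousOn f I) {t : ℝ}
    (ht : t ∈ Icc (0 : ℝ) 1) {x y : ℝ} (hx : x ∈ I) (hy : y ∈ I) :
    t * f x + (1 - t) * f y ∈ f '' I :=
  hI.image_of_continuousOn hf (mem_image_of_mem f hx) (mem_image_of_mem f hy) ht.1
    (sub_nonneg.2 ht.2) (add_sub_cancel t 1)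

theorem Convex.exists_isCompact_convex_between (hI : Convex ℝ I) {K : Set ℝ} (hK : IsCompact K)
    (hKI : K ⊆ I) : ∃ J, IsCompact J ∧ Convex ℝ J ∧ K ⊆ J ∧ J ⊆ I := by
  rcases K.eq_empty_or_nonempty with rfl | hne
  · exact ⟨∅, isCompact_empty, convex_empty, subset_rfl, empty_subset I⟩
  exact ⟨Icc (sInf K) (sSup K), isCompact_Icc, convex_Icc _ _,
    subset_Icc_csInf_csSup hK.bddBelow hK.bddAbove,
    hI.ordConnected.out (hKI (hK.sInf_mem hne)) (hKI (hK.sSup_mem hne))⟩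

theorem Convex.exists_isCompact_image_superset (hI : Convex ℝ I) (hf : ContinuousOn f I)
    {K : Set ℝ} (hK : IsCompact K) (hKI : K ⊆ f '' I) :
    ∃ J, IsCompact J ∧ J ⊆ I ∧ K ⊆ f '' J := by
  rcases K.eq_empty_or_nonempty with rfl | hne
  · exact ⟨∅, isCompact_empty, empty_subset I, empty_subset _⟩
  obtain ⟨a, ha, hfa⟩ := hKI (hK.sInf_mem hne)
  obtain ⟨b, hb, hfb⟩ := hKI (hK.sSup_mem hne)
  have hab : uIcc a b ⊆ I := hI.ordConnected.uIcc_subset ha hb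
  refine ⟨uIcc a b, isCompact_uIcc, hab, fun y hy => ?_⟩
  apply intermediate_value_uIcc (hf.mono hab)
  rw [hfa, hfb]
  exact Icc_subset_uIcc ⟨csInf_le hK.bddBelow hy, le_csSup hK.bddAbove hy⟩

end Real

theorem convexOn_of_mem_closure {X E : Type*} [TopologicalSpace X] [AddCommMonoid E]
    [Module ℝ E] {F : X → E → ℝ} {s : Set E} {S T : Set X} (hT : IsClosed T) (hST : S ⊆ T)
    (hF : ∀ x ∈ s, ContinuousOn (F · x) T) (hS : ∀ t ∈ S, ConvexOn ℝ s (F t)) {t : X}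
    (ht : t ∈ closure S) : ConvexOn ℝ s (F t) := by
  obtain ⟨t₀, ht₀⟩ := closure_nonempty_iff.1 ⟨t, ht⟩
  refine ⟨(hS t₀ ht₀).1, fun x hx y hy a b ha hb hab => ?_⟩
  have hz := (hS t₀ ht₀).1 hx hy ha hb hab
  have hclosed : IsClosed (T ∩ (fun u => a • F u x + b • F u y - F u (a • x + b • y)) ⁻¹' Ici 0) :=
    (((hF x hx).const_smul a).add ((hF y hy).const_smul b)).sub (hF _ hz)
      |>.preimage_isClosed_of_isClosed hT isClosed_Ici
  have hsub : S ⊆ T ∩ (fun u => a • F u x + b • F u y - F u (a • x + b • y)) ⁻¹' Ici 0 :=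
    fun u hu => ⟨hST hu, sub_nonneg.2 ((hS u hu).2 hx hy ha hb hab)⟩
  exact sub_nonneg.1 (closure_minimal hsub hclosed ht).2

theorem exists_mem_abs_sub_le_pow_of_mul_mem_of_one_sub_mem {p : ℝ} (hp : p ∈ Ioo (0 : ℝ) 1)
    {S : Set ℝ} (hpS : p ∈ S) (hmul : ∀ s ∈ S, ∀ t ∈ S, s * t ∈ S)
    (hsub : ∀ t ∈ S, 1 - t ∈ S) (n : ℕ) {t : ℝ} (ht : t ∈ Icc (0 : ℝ) 1) :
    ∃ s ∈ S, |t - s| ≤ max p (1 - p) ^ n := by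
  induction n generalizing t with
  | zero =>
    exact ⟨p, hpS, by rw [pow_zero, abs_le]; constructor <;> linarith [ht.1, ht.2, hp.1, hp.2]⟩
  | succ n ih =>
    have hscale : ∀ m ∈ S, 0 < m → m ≤ max p (1 - p) → ∀ u ∈ Icc (0 : ℝ) 1,
        ∃ s ∈ S, |m * u - s| ≤ max p (1 - p) ^ (n + 1) := by
      intro m hm hm0 hmc u hu
      obtain ⟨s, hs, hus⟩ := ih hu
      refine ⟨m * s, hmul m hm s hs, ?_⟩
      rw [← mul_sub, abs_mul, abs_of_pos hm0, pow_succ']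
      exact mul_le_mul hmc hus (abs_nonneg _) (hm0.le.trans hmc)
    -- write `t = p * u` or `1 - t = (1 - p) * u` with `u ∈ [0, 1]`
    rcases le_or_gt t p with htp | hpt
    · obtain ⟨s, hs, hts⟩ := hscale p hpS hp.1 (le_max_left _ _) (t / p)
        ⟨div_nonneg ht.1 hp.1.le, (div_le_one hp.1).2 htp⟩
      rw [mul_div_cancel₀ t hp.1.ne'] at hts
      exact ⟨s, hs, hts⟩
    · have hq : 0 < 1 - p := sub_pos.2 hp.2
      obtain ⟨s, hs, hts⟩ := hscale (1 - p) (hsub p hpS) hq (le_max_right _ _)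
        ((1 - t) / (1 - p)) ⟨div_nonneg (sub_nonneg.2 ht.2) hq.le, (div_le_one hq).2 (by linarith)⟩
      rw [mul_div_cancel₀ _ hq.ne'] at hts
      refine ⟨1 - s, hsub s hs, ?_⟩
      rwa [show t - (1 - s) = -(1 - t - s) by ring, abs_neg]

theorem Icc_subset_closure_of_mul_mem_of_one_sub_mem {p : ℝ} (hp : p ∈ Ioo (0 : ℝ) 1)
    {S : Set ℝ} (hpS : p ∈ S) (hmul : ∀ s ∈ S, ∀ t ∈ S, s * t ∈ S)
    (hsub : ∀ t ∈ S, 1 - t ∈ S) : Icc 0 1 ⊆ closure S := by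
  intro t ht
  refine Metric.mem_closure_iff.2 fun ε hε => ?_
  obtain ⟨n, hn⟩ := exists_pow_lt_of_lt_one hε (max_lt hp.2 (sub_lt_self 1 hp.1))
  obtain ⟨s, hs, hts⟩ := exists_mem_abs_sub_le_pow_of_mul_mem_of_one_sub_mem hp hpS hmul hsub n ht
  exact ⟨s, hs, (Real.dist_eq t s).trans_le hts |>.trans_lt hn⟩

section MemLc

variable {Ω : Type*} [MeasurableSpace Ω]

theorem ContinuousOn.measurable_comp {α β : Type*} [TopologicalSpace α] [MeasurableSpace α]
    [OpensMeasurableSpace α] [TopologicalSpace β] [MeasurableSpace β] [BorelSpace β]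
    {h : α → β} {s : Set α} (hh : ContinuousOn h s) {φ : Ω → α} (hφ : Measurable φ)
    (hφs : ∀ ω, φ ω ∈ s) : Measurable fun ω => h (φ ω) :=
  (continuousOn_iff_continuous_domRestrict.mp hh).measurable.comp (hφ.subtype_mk (h := hφs))

variable {I J : Set ℝ} {φ : Ω → ℝ}

theorem MemLc.mem (hφ : MemLc I φ) (ω : Ω) : φ ω ∈ I := by
  obtain ⟨-, K, hKI, -, hφK⟩ := hφ
  exact hKI (hφK ω)

theorem MemLc.comp (hφ : MemLc I φ) {h : ℝ → ℝ} (hh : ContinuousOn h I) (hIJ : MapsTo h I J) :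
    MemLc J fun ω => h (φ ω) := by
  obtain ⟨hm, K, hKI, hK, hφK⟩ := hφ
  exact ⟨hh.measurable_comp hm fun ω => hKI (hφK ω), h '' K, (hIJ.mono_left hKI).image_subset,
    hK.image_of_continuousOn (hh.mono hKI), fun ω => mem_image_of_mem h (hφK ω)⟩

theorem memLc_neg_iff : MemLc (-I) φ ↔ MemLc I (-φ) := by
  refine ⟨fun h => h.comp continuousOn_neg fun x hx => hx, fun h => ?_⟩
  simpa using h.comp continuousOn_neg fun x hx => show - -x ∈ I by simpa using hx

theorem MemLc.integrable (hφ : MemLc I φ) (P : Measure Ω) [IsFiniteMeasure P] :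
    Integrable φ P := by
  obtain ⟨hm, K, -, hK, hφK⟩ := hφ
  obtain ⟨C, hC⟩ := hK.isBounded.exists_norm_le
  exact Integrable.of_bound hm.aestronglyMeasurable C (ae_of_all _ fun ω => hC _ (hφK ω))

theorem MemLc.integral_mem (hI : Convex ℝ I) (hφ : MemLc I φ) (P : Measure Ω)
    [IsProbabilityMeasure P] : ∫ ω, φ ω ∂P ∈ I := by
  obtain ⟨-, K, hKI, hK, hφK⟩ := id hφ
  obtain ⟨J, hJ, hJc, hKJ, hJI⟩ := hI.exists_isCompact_convex_between hK hKI
  exact hJI (hJc.integral_mem hJ.isClosed (ae_of_all _ fun ω => hKJ (hφK ω)) (hφ.integrable P))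

theorem convex_setOf_memLc (hI : Convex ℝ I) : Convex ℝ {φ : Ω → ℝ | MemLc I φ} := by
  rintro φ₁ ⟨hm₁, K₁, hK₁I, hK₁, hφK₁⟩ φ₂ ⟨hm₂, K₂, hK₂I, hK₂, hφK₂⟩ a b ha hb hab
  refine ⟨(hm₁.const_smul a).add (hm₂.const_smul b),
    (fun q : ℝ × ℝ => a * q.1 + b * q.2) '' K₁ ×ˢ K₂, ?_, (hK₁.prod hK₂).image (by fun_prop),
    fun ω => ⟨(φ₁ ω, φ₂ ω), ⟨hφK₁ ω, hφK₂ ω⟩, rfl⟩⟩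
  rintro _ ⟨q, ⟨hq₁, hq₂⟩, rfl⟩
  exact hI (hK₁I hq₁) (hK₂I hq₂) ha hb hab

theorem memLc_piecewise {A : Set Ω} [DecidablePred (· ∈ A)] (hA : MeasurableSet A) {x y : ℝ}
    (hx : x ∈ I) (hy : y ∈ I) : MemLc I (A.piecewise (fun _ => x) fun _ => y) :=
  ⟨measurable_const.piecewise hA measurable_const, {x, y},
    insert_subset hx (singleton_subset_iff.2 hy),
    ((finite_singleton y).insert x).isCompact, fun ω => by by_cases hω : ω ∈ A <;> simp [hω]⟩

theorem MemLc.invFunOn {f : ℝ → ℝ} (hI : Convex ℝ I) (hf : ContinuousOn f I) (hinj : InjOn f I)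
    {ψ : Ω → ℝ} (hψ : MemLc (f '' I) ψ) : MemLc I fun ω => invFunOn f I (ψ ω) := by
  obtain ⟨hm, K, hKI, hK, hψK⟩ := hψ
  obtain ⟨J, hJ, hJI, hKJ⟩ := hI.exists_isCompact_image_superset hf hK hKI
  exact MemLc.comp ⟨hm, K, hKJ, hK, hψK⟩ (ContinuousOn.invFunOn_image hinj hJ hJI (hf.mono hJI))
    fun y hy => invFunOn_mem (image_mono hJI hy)

end MemLc

noncomputable def quasiMean (f : ℝ → ℝ) (I : Set ℝ) (t : ℝ) (q : ℝ × ℝ) : ℝ :=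
  invFunOn f I (t * f q.1 + (1 - t) * f q.2)

section QuasiMean

variable {f : ℝ → ℝ} {I : Set ℝ}

theorem quasiMean_neg (f : ℝ → ℝ) (I : Set ℝ) : quasiMean (-f) I = quasiMean f I := by
  funext t q
  simp only [quasiMean, Pi.neg_apply, mul_neg, ← neg_add, invFunOn_neg_neg]

theorem quasiMean_one_sub (t : ℝ) (q : ℝ × ℝ) :
    quasiMean f I (1 - t) q = quasiMean f I t q.swap := by
  simp only [quasiMean, Prod.fst_swap, Prod.snd_swap, sub_sub_cancel, add_comm]

theorem quasiMean_spec (hI : Convex ℝ I) (hf : ContinuousOn f I) {t : ℝ} (ht : t ∈ Icc (0 : ℝ) 1)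
    {q : ℝ × ℝ} (hq : q ∈ I ×ˢ I) :
    quasiMean f I t q ∈ I ∧ f (quasiMean f I t q) = t * f q.1 + (1 - t) * f q.2 :=
  invFunOn_pos (hI.combo_mem_image hf ht hq.1 hq.2)

theorem quasiMean_quasiMean_fst (hI : Convex ℝ I) (hf : ContinuousOn f I) (s : ℝ) {t : ℝ}
    (ht : t ∈ Icc (0 : ℝ) 1) {q : ℝ × ℝ} (hq : q ∈ I ×ˢ I) :
    quasiMean f I s (quasiMean f I t q, q.2) = quasiMean f I (s * t) q := by
  change invFunOn f I (s * f (quasiMean f I t q) + (1 - s) * f q.2) = _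
  rw [(quasiMean_spec hI hf ht hq).2, quasiMean]
  ring_nf

theorem monotoneOn_quasiMean (hI : Convex ℝ I) (hf : ContinuousOn f I)
    (hmono : StrictMonoOn f I ∨ StrictAntiOn f I) {t : ℝ} (ht : t ∈ Icc (0 : ℝ) 1) :
    MonotoneOn (quasiMean f I t) (I ×ˢ I) := by
  wlog hf' : StrictMonoOn f I generalizing f
  · have hanti := hmono.resolve_left hf'
    simpa only [quasiMean_neg] using this hf.neg (Or.inl hanti.neg) hanti.neg
  intro q hq q' hq' hqq'
  obtain ⟨hm, hfm⟩ := quasiMean_spec hI hf ht hq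
  obtain ⟨hm', hfm'⟩ := quasiMean_spec hI hf ht hq'
  rw [← hf'.le_iff_le hm hm', hfm, hfm']
  exact add_le_add (mul_le_mul_of_nonneg_left (hf'.monotoneOn hq.1 hq'.1 hqq'.1) ht.1)
    (mul_le_mul_of_nonneg_left (hf'.monotoneOn hq.2 hq'.2 hqq'.2) (sub_nonneg.2 ht.2))

theorem continuousOn_quasiMean (hf : ContinuousOn f I) (hinj : InjOn f I) {J : Set ℝ}
    (hJ : IsCompact J) (hJc : Convex ℝ J) (hJI : J ⊆ I) {t : ℝ} (ht : t ∈ Icc (0 : ℝ) 1) :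
    ContinuousOn (quasiMean f I t) (J ×ˢ J) := by
  have hfJ := hf.mono hJI
  have hfst : ContinuousOn (fun q : ℝ × ℝ => f q.1) (J ×ˢ J) :=
    hfJ.comp continuousOn_fst fun q hq => hq.1
  have hsnd : ContinuousOn (fun q : ℝ × ℝ => f q.2) (J ×ˢ J) :=
    hfJ.comp continuousOn_snd fun q hq => hq.2
  exact (ContinuousOn.invFunOn_image hinj hJ hJI hfJ).comp
    ((continuousOn_const.mul hfst).add (continuousOn_const.mul hsnd))
    fun q hq => hJc.combo_mem_image hfJ ht hq.1 hq.2

theorem continuousOn_quasiMean_weight (hI : Convex ℝ I) (hf : ContinuousOn f I)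
    (hinj : InjOn f I) {q : ℝ × ℝ} (hq : q ∈ I ×ˢ I) :
    ContinuousOn (fun t => quasiMean f I t q) (Icc 0 1) := by
  have hJI : uIcc q.1 q.2 ⊆ I := hI.ordConnected.uIcc_subset hq.1 hq.2
  have hfJ := hf.mono hJI
  exact (ContinuousOn.invFunOn_image hinj isCompact_uIcc hJI hfJ).comp (by fun_prop)
    fun t ht => (convex_uIcc q.1 q.2).combo_mem_image hfJ ht left_mem_uIcc right_mem_uIcc

theorem ConvexOn.quasiMean_one_sub {t : ℝ} (h : ConvexOn ℝ (I ×ˢ I) (quasiMean f I t)) :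
    ConvexOn ℝ (I ×ˢ I) (quasiMean f I (1 - t)) := by
  refine ⟨h.1, fun q hq q' hq' a b ha hb hab => ?_⟩
  simp only [_root_.quasiMean_one_sub]
  exact h.2 (show q.swap ∈ I ×ˢ I from ⟨hq.2, hq.1⟩) (show q'.swap ∈ I ×ˢ I from ⟨hq'.2, hq'.1⟩)
    ha hb hab

theorem ConvexOn.quasiMean_mul (hI : Convex ℝ I) (hf : ContinuousOn f I)
    (hmono : StrictMonoOn f I ∨ StrictAntiOn f I) {s t : ℝ} (hs : s ∈ Icc (0 : ℝ) 1)
    (ht : t ∈ Icc (0 : ℝ) 1) (hGs : ConvexOn ℝ (I ×ˢ I) (quasiMean f I s))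
    (hGt : ConvexOn ℝ (I ×ˢ I) (quasiMean f I t)) :
    ConvexOn ℝ (I ×ˢ I) (quasiMean f I (s * t)) := by
  refine ⟨hGt.1, fun q hq q' hq' a b ha hb hab => ?_⟩
  have hmem : ∀ p ∈ I ×ˢ I, (quasiMean f I t p, p.2) ∈ I ×ˢ I :=
    fun p hp => ⟨(quasiMean_spec hI hf ht hp).1, hp.2⟩
  have hqq' := hGt.1 hq hq' ha hb hab
  calc quasiMean f I (s * t) (a • q + b • q')
      = quasiMean f I s (quasiMean f I t (a • q + b • q'), (a • q + b • q').2) :=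
        (quasiMean_quasiMean_fst hI hf s ht hqq').symm
    _ ≤ quasiMean f I s (a • (quasiMean f I t q, q.2) + b • (quasiMean f I t q', q'.2)) :=
        monotoneOn_quasiMean hI hf hmono hs (hmem _ hqq')
          (hGs.1 (hmem q hq) (hmem q' hq') ha hb hab) ⟨hGt.2 hq hq' ha hb hab, le_rfl⟩
    _ ≤ a • quasiMean f I s (quasiMean f I t q, q.2) +
          b • quasiMean f I s (quasiMean f I t q', q'.2) :=
        hGs.2 (hmem q hq) (hmem q' hq') ha hb hab
    _ = a • quasiMean f I (s * t) q + b • quasiMean f I (s * t) q' := by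
        rw [quasiMean_quasiMean_fst hI hf s ht hq, quasiMean_quasiMean_fst hI hf s ht hq']

theorem convexOn_quasiMean_of_convexOn_quasiMean (hI : Convex ℝ I)
    (hf : ContinuousOn f I) (hmono : StrictMonoOn f I ∨ StrictAntiOn f I) {p : ℝ}
    (hp : p ∈ Ioo (0 : ℝ) 1) (hGp : ConvexOn ℝ (I ×ˢ I) (quasiMean f I p)) {t : ℝ}
    (ht : t ∈ Icc (0 : ℝ) 1) : ConvexOn ℝ (I ×ˢ I) (quasiMean f I t) := by
  have hinj : InjOn f I := hmono.elim StrictMonoOn.injOn StrictAntiOn.injOn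
  set S := {t ∈ Icc (0 : ℝ) 1 | ConvexOn ℝ (I ×ˢ I) (quasiMean f I t)}
  have hdense : Icc 0 1 ⊆ closure S :=
    Icc_subset_closure_of_mul_mem_of_one_sub_mem hp ⟨Ioo_subset_Icc_self hp, hGp⟩
      (fun s hs t ht =>
        ⟨unitInterval.mul_mem hs.1 ht.1, hs.2.quasiMean_mul hI hf hmono hs.1 ht.1 ht.2⟩)
      (fun t ht => ⟨Icc.mem_iff_one_sub_mem.1 ht.1, ht.2.quasiMean_one_sub⟩)
  exact convexOn_of_mem_closure isClosed_Icc (fun _ h => h.1)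
    (fun q hq => continuousOn_quasiMean_weight hI hf hinj hq) (fun _ h => h.2) (hdense ht)

end QuasiMean

section Potential

variable {Ω : Type*} [MeasurableSpace Ω] (P : Measure Ω) {f : ℝ → ℝ} {I : Set ℝ}

theorem fPotential_neg (f : ℝ → ℝ) (I : Set ℝ) : fPotential P (-f) I = fPotential P f I := by
  funext φ
  simp only [fPotential, Pi.neg_apply, integral_neg, invFunOn_neg_neg]

theorem fPotential_congr {f' : ℝ → ℝ} (h : EqOn f f' I) {φ : Ω → ℝ} (hφ : ∀ ω, φ ω ∈ I) :
    fPotential P f I φ = fPotential P f' I φ := by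
  simp only [fPotential, h.invFunOn_eq]
  congr 1
  exact integral_congr_ae (ae_of_all _ fun ω => h (hφ ω))

theorem eqOn_fPotential_invFunOn_comp_neg (hinj : InjOn f I) :
    EqOn (fPotential P (invFunOn (fun x => f (-x)) (-I)) (f '' I))
      (fPotential P (invFunOn f I) (f '' I)) {ψ : Ω → ℝ | MemLc (f '' I) ψ} := fun ψ hψ => by
  rw [fPotential_congr P (f' := -invFunOn f I) (fun y hy => hinj.invFunOn_comp_neg hy) hψ.mem,
    fPotential_neg]

variable [IsProbabilityMeasure P]

theorem fPotential_piecewise {A : Set Ω} [DecidablePred (· ∈ A)]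
    (hA : MeasurableSet A) (x y : ℝ) :
    fPotential P f I (A.piecewise (fun _ => x) fun _ => y) = quasiMean f I (P.real A) (x, y) := by
  have hcomp : (fun ω => f (A.piecewise (fun _ => x) (fun _ => y) ω))
      = A.piecewise (fun _ => f x) fun _ => f y := by
    funext ω
    by_cases hω : ω ∈ A <;> simp [hω]
  simp only [fPotential, quasiMean, hcomp]
  rw [integral_piecewise hA (integrableOn_const) (integrableOn_const), setIntegral_const,
    setIntegral_const, probReal_compl_eq_one_sub hA, smul_eq_mul, smul_eq_mul]

theorem fPotential_comp_neg (hI : Convex ℝ I) (hf : ContinuousOn f I) (hinj : InjOn f I)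
    {φ : Ω → ℝ} (hφ : MemLc (-I) φ) :
    fPotential P (fun x => f (-x)) (-I) φ = -fPotential P f I (-φ) :=
  hinj.invFunOn_comp_neg
    (((memLc_neg_iff.1 hφ).comp hf (mapsTo_image f I)).integral_mem (hI.image_of_continuousOn hf) P)

theorem ConcaveOn.convexOn_fPotential_comp_neg (hI : Convex ℝ I) (hf : ContinuousOn f I)
    (hinj : InjOn f I) (h : ConcaveOn ℝ {φ : Ω → ℝ | MemLc I φ} (fPotential P f I)) :
    ConvexOn ℝ {φ : Ω → ℝ | MemLc (-I) φ} (fPotential P (fun x => f (-x)) (-I)) := by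
  have h' := h.neg.comp_linearMap (-LinearMap.id)
  have hset : (-LinearMap.id : (Ω → ℝ) →ₗ[ℝ] Ω → ℝ) ⁻¹' {φ | MemLc I φ} = {φ | MemLc (-I) φ} := by
    ext φ
    exact memLc_neg_iff.symm
  rw [hset] at h'
  exact h'.congr fun φ hφ => (fPotential_comp_neg P hI hf hinj hφ).symm

theorem fPotential_invFunOn (hI : Convex ℝ I) (hf : ContinuousOn f I) (hinj : InjOn f I)
    {ψ : Ω → ℝ} (hψ : MemLc (f '' I) ψ) :
    fPotential P (invFunOn f I) (f '' I) ψ = f (∫ ω, invFunOn f I (ψ ω) ∂P) :=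
  hinj.invFunOn_invFunOn ((hψ.invFunOn hI hf hinj).integral_mem hI P)

theorem convexOn_quasiMean_of_convexOn_fPotential {A : Set Ω} (hA : MeasurableSet A)
    (hI : Convex ℝ I) (h : ConvexOn ℝ {φ : Ω → ℝ | MemLc I φ} (fPotential P f I)) :
    ConvexOn ℝ (I ×ˢ I) (quasiMean f I (P.real A)) := by
  classical
  let twoValued : ℝ × ℝ → Ω → ℝ := fun q => A.piecewise (fun _ => q.1) fun _ => q.2
  refine ⟨hI.prod hI, fun q hq q' hq' a b ha hb hab => ?_⟩
  have hlin : a • twoValued q + b • twoValued q' = twoValued (a • q + b • q') := by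
    funext ω
    by_cases hω : ω ∈ A <;> simp [twoValued, hω]
  have h' := h.2 (memLc_piecewise hA hq.1 hq.2) (memLc_piecewise hA hq'.1 hq'.2) ha hb hab
  simpa only [twoValued, hlin, fPotential_piecewise P hA] using h'

theorem quasiMean_integral_le (hI : Convex ℝ I) (hf : ContinuousOn f I) (hinj : InjOn f I)
    {a b : ℝ} (ha : 0 ≤ a) (hb : 0 ≤ b) (hab : a + b = 1)
    (hG : ConvexOn ℝ (I ×ˢ I) (quasiMean f I a)) {ψ₁ ψ₂ : Ω → ℝ}
    (hψ₁ : MemLc (f '' I) ψ₁) (hψ₂ : MemLc (f '' I) ψ₂) :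
    quasiMean f I a (∫ ω, invFunOn f I (ψ₁ ω) ∂P, ∫ ω, invFunOn f I (ψ₂ ω) ∂P) ≤
      ∫ ω, invFunOn f I ((a • ψ₁ + b • ψ₂) ω) ∂P := by
  have hu₁ := hψ₁.invFunOn hI hf hinj
  have hu₂ := hψ₂.invFunOn hI hf hinj
  obtain ⟨-, K₁, hK₁I, hK₁, hu₁K⟩ := id hu₁
  obtain ⟨-, K₂, hK₂I, hK₂, hu₂K⟩ := id hu₂
  -- Jensen's inequality needs a closed domain: a compact interval `J ⊆ I` containing both ranges
  obtain ⟨J, hJ, hJc, hKJ, hJI⟩ :=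
    hI.exists_isCompact_convex_between (hK₁.union hK₂) (union_subset hK₁I hK₂I)
  have hmix : MemLc (f '' I) (a • ψ₁ + b • ψ₂) :=
    convex_setOf_memLc (hI.image_of_continuousOn hf) hψ₁ hψ₂ ha hb hab
  have hcomp : (fun ω => quasiMean f I a (invFunOn f I (ψ₁ ω), invFunOn f I (ψ₂ ω))) =
      fun ω => invFunOn f I ((a • ψ₁ + b • ψ₂) ω) := by
    funext ω
    simp only [quasiMean, invFunOn_eq (hψ₁.mem ω), invFunOn_eq (hψ₂.mem ω), ← hab,
      add_sub_cancel_left, Pi.add_apply, Pi.smul_apply, smul_eq_mul]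
  have hjensen := (hG.subset (prod_mono hJI hJI) (hJc.prod hJc)).map_integral_le
    (continuousOn_quasiMean hf hinj hJ hJc hJI ⟨ha, by linarith⟩) (hJ.prod hJ).isClosed
    (ae_of_all _ fun ω => ⟨hKJ (Or.inl (hu₁K ω)), hKJ (Or.inr (hu₂K ω))⟩)
    ((hu₁.integrable P).prodMk (hu₂.integrable P))
    (by rw [comp_def, hcomp]; exact (hmix.invFunOn hI hf hinj).integrable P)
  rwa [integral_pair (hu₁.integrable P) (hu₂.integrable P), hcomp] at hjensen

theorem exists_combination_fPotential_invFunOn_eq (hI : Convex ℝ I) (hf : ContinuousOn f I)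
    (hinj : InjOn f I) (hG : ∀ a ∈ Icc (0 : ℝ) 1, ConvexOn ℝ (I ×ˢ I) (quasiMean f I a))
    {ψ₁ ψ₂ : Ω → ℝ} (hψ₁ : MemLc (f '' I) ψ₁) (hψ₂ : MemLc (f '' I) ψ₂) {a b : ℝ}
    (ha : 0 ≤ a) (hb : 0 ≤ b) (hab : a + b = 1) :
    ∃ z ∈ I, ∃ z' ∈ I, z ≤ z' ∧
      a • fPotential P (invFunOn f I) (f '' I) ψ₁ + b • fPotential P (invFunOn f I) (f '' I) ψ₂
        = f z ∧ fPotential P (invFunOn f I) (f '' I) (a • ψ₁ + b • ψ₂) = f z' := by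
  have ha1 : a ∈ Icc (0 : ℝ) 1 := ⟨ha, by linarith⟩
  have hmix : MemLc (f '' I) (a • ψ₁ + b • ψ₂) :=
    convex_setOf_memLc (hI.image_of_continuousOn hf) hψ₁ hψ₂ ha hb hab
  have hu : ∀ ψ, MemLc (f '' I) ψ → ∫ ω, invFunOn f I (ψ ω) ∂P ∈ I :=
    fun ψ hψ => (hψ.invFunOn hI hf hinj).integral_mem hI P
  obtain ⟨hzI, hfz⟩ := quasiMean_spec hI hf ha1 (mk_mem_prod (hu ψ₁ hψ₁) (hu ψ₂ hψ₂))
  refine ⟨_, hzI, _, hu _ hmix, quasiMean_integral_le P hI hf hinj ha hb hab (hG a ha1) hψ₁ hψ₂,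
    ?_, fPotential_invFunOn P hI hf hinj hmix⟩
  rw [hfz, fPotential_invFunOn P hI hf hinj hψ₁, fPotential_invFunOn P hI hf hinj hψ₂, ← hab,
    add_sub_cancel_left, smul_eq_mul, smul_eq_mul]

theorem concaveOn_fPotential_invFunOn (hI : Convex ℝ I) (hf : ContinuousOn f I)
    (hmono : StrictMonoOn f I) (hG : ∀ a ∈ Icc (0 : ℝ) 1, ConvexOn ℝ (I ×ˢ I) (quasiMean f I a)) :
    ConcaveOn ℝ {ψ : Ω → ℝ | MemLc (f '' I) ψ} (fPotential P (invFunOn f I) (f '' I)) := by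
  refine ⟨convex_setOf_memLc (hI.image_of_continuousOn hf), fun ψ₁ h₁ ψ₂ h₂ a b ha hb hab => ?_⟩
  obtain ⟨z, hz, z', hz', hzz', hfz, hfz'⟩ :=
    exists_combination_fPotential_invFunOn_eq P hI hf hmono.injOn hG h₁ h₂ ha hb hab
  rw [hfz, hfz']
  exact hmono.monotoneOn hz hz' hzz'

theorem convexOn_fPotential_invFunOn (hI : Convex ℝ I) (hf : ContinuousOn f I)
    (hanti : StrictAntiOn f I) (hG : ∀ a ∈ Icc (0 : ℝ) 1, ConvexOn ℝ (I ×ˢ I) (quasiMean f I a)) :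
    ConvexOn ℝ {ψ : Ω → ℝ | MemLc (f '' I) ψ} (fPotential P (invFunOn f I) (f '' I)) := by
  refine ⟨convex_setOf_memLc (hI.image_of_continuousOn hf), fun ψ₁ h₁ ψ₂ h₂ a b ha hb hab => ?_⟩
  obtain ⟨z, hz, z', hz', hzz', hfz, hfz'⟩ :=
    exists_combination_fPotential_invFunOn_eq P hI hf hanti.injOn hG h₁ h₂ ha hb hab
  rw [hfz, hfz']
  exact hanti.antitoneOn hz hz' hzz'

end Potential

theorem convexOn_or_concaveOn_fPotential_invFunOn {Ω : Type*} [MeasurableSpace Ω]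
    (P : Measure Ω) [IsProbabilityMeasure P]
    (hP : ∃ A : Set Ω, MeasurableSet A ∧ 0 < P A ∧ P A < 1) {f : ℝ → ℝ} {I : Set ℝ}
    (hI : Convex ℝ I) (hf : ContinuousOn f I) (hmono : StrictMonoOn f I ∨ StrictAntiOn f I)
    (h : ConvexOn ℝ {φ : Ω → ℝ | MemLc I φ} (fPotential P f I)) :
    ConvexOn ℝ {ψ : Ω → ℝ | MemLc (f '' I) ψ} (fPotential P (invFunOn f I) (f '' I)) ∨
      ConcaveOn ℝ {ψ : Ω → ℝ | MemLc (f '' I) ψ} (fPotential P (invFunOn f I) (f '' I)) := by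
  obtain ⟨A, hA, hA0, hA1⟩ := hP
  have hp : P.real A ∈ Ioo (0 : ℝ) 1 :=
    ⟨ENNReal.toReal_pos hA0.ne' (measure_ne_top P A),
      ENNReal.toReal_lt_of_lt_ofReal (by rwa [ENNReal.ofReal_one])⟩
  have hG : ∀ a ∈ Icc (0 : ℝ) 1, ConvexOn ℝ (I ×ˢ I) (quasiMean f I a) := fun a ha =>
    convexOn_quasiMean_of_convexOn_quasiMean hI hf hmono hp
      (convexOn_quasiMean_of_convexOn_fPotential P hA hI h) ha
  rcases hmono with hmono | hanti
  · exact Or.inr (concaveOn_fPotential_invFunOn P hI hf hmono hG)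
  · exact Or.inl (convexOn_fPotential_invFunOn P hI hf hanti hG)

theorem inverse_potential_convex_or_concave
    {Ω : Type*} [MeasurableSpace Ω] (P : Measure Ω) [IsProbabilityMeasure P]
    (hP : ∃ A : Set Ω, MeasurableSet A ∧ 0 < P A ∧ P A < 1)
    (I : Set ℝ) (hIconv : Convex ℝ I)
    (f : ℝ → ℝ) (hfc : ContinuousOn f I)
    (hfm : StrictMonoOn f I ∨ StrictAntiOn f I)
    (g : ℝ → ℝ) (hg : g = Function.invFunOn f I)
    (hconc : ConvexOn ℝ {φ : Ω → ℝ | MemLc I φ} (fPotential P f I) ∨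
      ConcaveOn ℝ {φ : Ω → ℝ | MemLc I φ} (fPotential P f I)) :
    ConvexOn ℝ {φ : Ω → ℝ | MemLc (f '' I) φ} (fPotential P g (f '' I)) ∨
      ConcaveOn ℝ {φ : Ω → ℝ | MemLc (f '' I) φ} (fPotential P g (f '' I)) := by
  subst hg
  rcases hconc with hconv | hconc
  · exact convexOn_or_concaveOn_fPotential_invFunOn P hP hIconv hfc hfm hconv
  have hinj : InjOn f I := hfm.elim StrictMonoOn.injOn StrictAntiOn.injOn
  have h := convexOn_or_concaveOn_fPotential_invFunOn P hP (f := fun x => f (-x)) hIconv.neg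
    (hfc.comp continuousOn_neg fun _ hx => hx) (strictMonoOn_or_strictAntiOn_comp_neg hfm)
    (hconc.convexOn_fPotential_comp_neg P hIconv hfc hinj)
  rw [image_comp_neg] at h
  exact h.imp (·.congr (eqOn_fPotential_invFunOn_comp_neg P hinj))
    (·.congr (eqOn_fPotential_invFunOn_comp_neg P hinj))
end

section
/- Let I ⊆ ℝ be an open interval and let f : ℝ → ℝ be twice continuously differentiable, strictly increasing and convex on I. Assume that at least one of the following two sets is convex: the set {(x,t) ∈ ℝ × ℝ : x ∈ I ∧ t·f''(x) ≤ f'(x)} (the hypograph of h(x) = f'(x)/f''(x) ∈ (0,+∞]) or the set {(y,t) ∈ ℝ × ℝ : ∃ x ∈ I, y = f(x) ∧ t·f''(x) ≤ (f'(x))²} (the hypograph of H with H(f(x)) = f'(x)²/f''(x) ∈ (0,+∞]). Then there is an alternative: either f''(x) ≠ 0 for all x ∈ I, or f''(x) = 0 for all x ∈ I. -/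
/-!
Suppose `f''` vanishes at `a` and not at `b`. Since `f' ≥ 0`, the hypograph of `h = f'/f''`
contains the whole vertical line over `a` together with a point over `b`, so by convexity it
contains every vertical line over the open segment `(a, b)`, i.e. `f'' = 0` there. The same
argument in the `y = f(x)` coordinate, where `f` is injective, handles `H`. By continuity of `f''`
we then get `f''(b) = 0`, a contradiction.
-/

open Set

/-- The hypograph of the extended-real function `v / u` on `I` (`+∞` where `u = 0`). -/
def ratioHypograph (I : Set ℝ) (u v : ℝ → ℝ) : Set (ℝ × ℝ) :=
  {p | p.1 ∈ I ∧ p.2 * u p.1 ≤ v p.1}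

/-- The hypograph of the function `H` on `φ '' I` defined implicitly by `H (φ x) = v x / u x`. -/
def ratioHypographAlong (I : Set ℝ) (φ u v : ℝ → ℝ) : Set (ℝ × ℝ) :=
  {p | ∃ x ∈ I, p.1 = φ x ∧ p.2 * u x ≤ v x}

lemma eq_zero_of_forall_mul_le {u v : ℝ} (h : ∀ s, s * u ≤ v) : u = 0 := by
  by_contra hu
  have := h ((v + 1) / u)
  rw [div_mul_cancel₀ _ hu] at this
  linarith

lemma Convex.prodMk_mem_of_mem_openSegment {𝕜 E : Type*} [Field 𝕜] [LinearOrder 𝕜]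
    [IsStrictOrderedRing 𝕜] [AddCommGroup E] [Module 𝕜 E] {S : Set (E × 𝕜)}
    (hS : Convex 𝕜 S) {p q x : E} {t : 𝕜} (hp : ∀ s, (p, s) ∈ S) (hq : (q, t) ∈ S)
    (hx : x ∈ openSegment 𝕜 p q) (s : 𝕜) : (x, s) ∈ S := by
  obtain ⟨α, β, hα, hβ, hαβ, rfl⟩ := hx
  convert hS (hp ((s - β * t) / α)) hq hα.le hβ.le hαβ using 1
  simp only [Prod.smul_mk, Prod.mk_add_mk, smul_eq_mul, Prod.mk.injEq, true_and]
  field_simp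
  ring

lemma StrictMonoOn.apply_mem_openSegment {f : ℝ → ℝ} {I : Set ℝ} (hf : StrictMonoOn f I)
    {a b x : ℝ} (ha : a ∈ I) (hb : b ∈ I) (hx : x ∈ I) (hxab : x ∈ openSegment ℝ a b) :
    f x ∈ openSegment ℝ (f a) (f b) := by
  rcases lt_trichotomy a b with hab | rfl | hab
  · rw [openSegment_eq_Ioo hab] at hxab
    rw [openSegment_eq_Ioo (hf ha hb hab)]
    exact ⟨hf ha hx hxab.1, hf hx hb hxab.2⟩
  · simp_all [openSegment_same]
  · rw [openSegment_symm, openSegment_eq_Ioo hab] at hxab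
    rw [openSegment_symm, openSegment_eq_Ioo (hf hb ha hab)]
    exact ⟨hf hb hx hxab.1, hf hx ha hxab.2⟩

lemma eq_zero_of_mem_openSegment_of_convex_ratioHypograph {I : Set ℝ} {u v : ℝ → ℝ}
    (hS : Convex ℝ (ratioHypograph I u v)) {a b : ℝ} (ha : a ∈ I) (hua : u a = 0)
    (hva : 0 ≤ v a) (hb : b ∈ I) (hub : u b ≠ 0) : ∀ x ∈ openSegment ℝ a b, u x = 0 := by
  intro x hx
  have hline : ∀ s, (a, s) ∈ ratioHypograph I u v := fun s ↦ ⟨ha, by simpa [hua] using hva⟩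
  have hpoint : (b, v b / u b) ∈ ratioHypograph I u v := ⟨hb, by rw [div_mul_cancel₀ _ hub]⟩
  exact eq_zero_of_forall_mul_le (v := v x) fun s ↦
    (hS.prodMk_mem_of_mem_openSegment hline hpoint hx s).2

lemma eq_zero_of_mem_openSegment_of_convex_ratioHypographAlong {I : Set ℝ} {φ u v : ℝ → ℝ}
    (hφ : StrictMonoOn φ I) (hS : Convex ℝ (ratioHypographAlong I φ u v)) {a b : ℝ}
    (ha : a ∈ I) (hua : u a = 0) (hva : 0 ≤ v a) (hb : b ∈ I) (hub : u b ≠ 0) :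
    ∀ x ∈ I, x ∈ openSegment ℝ a b → u x = 0 := by
  intro x hxI hx
  have hline : ∀ s, (φ a, s) ∈ ratioHypographAlong I φ u v :=
    fun s ↦ ⟨a, ha, rfl, by simpa [hua] using hva⟩
  have hpoint : (φ b, v b / u b) ∈ ratioHypographAlong I φ u v :=
    ⟨b, hb, rfl, by rw [div_mul_cancel₀ _ hub]⟩
  refine eq_zero_of_forall_mul_le (v := v x) fun s ↦ ?_
  obtain ⟨x', hx'I, hφx, hle⟩ := hS.prodMk_mem_of_mem_openSegment hline hpoint
    (hφ.apply_mem_openSegment ha hb hxI hx) s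
  rwa [hφ.injOn hx'I hxI hφx.symm] at hle

lemma Convex.forall_ne_or_forall_eq_of_eq_on_openSegment {E Y : Type*} [AddCommGroup E]
    [Module ℝ E] [TopologicalSpace E] [ContinuousAdd E] [ContinuousSMul ℝ E]
    [TopologicalSpace Y] [T2Space Y] {I : Set E} {g : E → Y} {c : Y} (hI : Convex ℝ I)
    (hg : ContinuousOn g I)
    (h : ∀ a ∈ I, ∀ b ∈ I, g a = c → g b ≠ c → ∀ x ∈ openSegment ℝ a b, g x = c) :
    (∀ x ∈ I, g x ≠ c) ∨ (∀ x ∈ I, g x = c) := by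
  by_contra! ⟨⟨a, ha, hac⟩, b, hb, hbc⟩
  have hopen : EqOn g (fun _ ↦ c) (openSegment ℝ a b) := h a ha b hb hac hbc
  have hseg : EqOn g (fun _ ↦ c) (segment ℝ a b) :=
    hopen.of_subset_closure (hg.mono (hI.segment_subset ha hb))
      continuousOn_const (openSegment_subset_segment ..) segment_subset_closure_openSegment
  exact hbc (hseg (right_mem_segment ..))

theorem second_derivative_alternative_general
    (I : Set ℝ) (hIopen : IsOpen I) (hIconv : Convex ℝ I)
    (f : ℝ → ℝ) (hf : ContDiffOn ℝ 2 f I)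
    (hmono : StrictMonoOn f I)
    (hhyp : Convex ℝ {p : ℝ × ℝ | p.1 ∈ I ∧ p.2 * deriv (deriv f) p.1 ≤ deriv f p.1} ∨
      Convex ℝ {p : ℝ × ℝ |
        ∃ x ∈ I, p.1 = f x ∧ p.2 * deriv (deriv f) x ≤ (deriv f x) ^ 2}) :
    (∀ x ∈ I, deriv (deriv f) x ≠ 0) ∨ (∀ x ∈ I, deriv (deriv f) x = 0) := by
  have hf'' : ContinuousOn (deriv (deriv f)) I :=
    (hf.deriv_of_isOpen hIopen (by norm_num)).continuousOn_deriv_of_isOpen hIopen le_rfl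
  refine hIconv.forall_ne_or_forall_eq_of_eq_on_openSegment hf'' fun a ha b hb ha0 hb0 ↦ ?_
  rcases hhyp with hS | hS
  · have hf'a : 0 ≤ deriv f a := by
      rw [← derivWithin_of_isOpen hIopen ha]
      exact hmono.monotoneOn.derivWithin_nonneg
    exact eq_zero_of_mem_openSegment_of_convex_ratioHypograph hS ha ha0 hf'a hb hb0
  · exact fun x hx ↦ eq_zero_of_mem_openSegment_of_convex_ratioHypographAlong hmono hS ha ha0
      (sq_nonneg _) hb hb0 x (hIconv.openSegment_subset ha hb hx) hx

theorem second_derivative_alternative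
    (I : Set ℝ) (hIopen : IsOpen I) (hIconv : Convex ℝ I)
    (f : ℝ → ℝ) (hf : ContDiffOn ℝ 2 f I)
    (hmono : StrictMonoOn f I) (hconv : ConvexOn ℝ I f)
    (hhyp : Convex ℝ {p : ℝ × ℝ | p.1 ∈ I ∧ p.2 * deriv (deriv f) p.1 ≤ deriv f p.1} ∨
      Convex ℝ {p : ℝ × ℝ |
        ∃ x ∈ I, p.1 = f x ∧ p.2 * deriv (deriv f) x ≤ (deriv f x) ^ 2}) :
    (∀ x ∈ I, deriv (deriv f) x ≠ 0) ∨ (∀ x ∈ I, deriv (deriv f) x = 0) :=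
  second_derivative_alternative_general I hIopen hIconv f hf hmono hhyp
end

section
/- Let I ⊆ ℝ be an open interval and let f : ℝ → ℝ be twice continuously differentiable and strictly monotone on I with f''(x) ≠ 0 for all x ∈ I. Let g be the inverse of the restriction of f to I, define h : I → ℝ by h(x) = f'(x)/f''(x) and H : f(I) → ℝ by H(y) = f'(g(y))²/f''(g(y)) (so that H(f(x)) = f'(x)²/f''(x) for x ∈ I). Then: if f is strictly increasing on I, h is convex (respectively concave) on I if and only if H is convex (respectively concave) on f(I); and if f is strictly decreasing on I, h is convex (respectively concave) on I if and only if H is concave (respectively convex) on f(I). -/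
/-!
Formally `(H ∘ f)' = f' * (1 + h')`, i.e. `H' ∘ f = 1 + h'`, so for increasing `f` the derivative
of `H` is monotone exactly when that of `h` is. As `h` need not be differentiable, this is made
rigorous with supporting lines: a supporting line of slope `m` for `h` at `x₀` yields one of slope
`1 + m` for `H` at `f x₀`. For the converse, the inverse `g` of `f` carries the pair `(-H, -h)`,
so the same implication applied to `g` gives it back. The decreasing and the concave cases follow
by the reflections `f ↦ -f` and `f ↦ -f (-·)`.
-/

open Set Function Filter

theorem ConvexOn.exists_supportingLine {s : Set ℝ} {f : ℝ → ℝ} {x₀ : ℝ} (hf : ConvexOn ℝ s f)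
    (hx₀ : x₀ ∈ interior s) : ∃ m, ∀ x ∈ s, f x₀ + m * (x - x₀) ≤ f x := by
  refine ⟨derivWithin f (Ioi x₀) x₀, fun x hx => ?_⟩
  rcases lt_trichotomy x x₀ with hlt | rfl | hgt
  · have := (hf.slope_le_leftDeriv_of_mem_interior hx hx₀ hlt).trans
      (hf.leftDeriv_le_rightDeriv_of_mem_interior hx₀)
    rw [slope_def_field, div_le_iff₀ (sub_pos.2 hlt)] at this
    linarith
  · simp
  · have := hf.rightDeriv_le_slope_of_mem_interior hx₀ hx hgt
    rw [slope_def_field, le_div_iff₀ (sub_pos.2 hgt)] at this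
    linarith

theorem convexOn_of_exists_supportingLine {s : Set ℝ} {f : ℝ → ℝ} (hs : Convex ℝ s)
    (hf : ∀ x₀ ∈ s, ∃ m, ∀ x ∈ s, f x₀ + m * (x - x₀) ≤ f x) : ConvexOn ℝ s f := by
  refine ⟨hs, fun x hx y hy a b ha hb hab => ?_⟩
  obtain ⟨m, hm⟩ := hf _ (hs hx hy ha hb hab)
  have hx' := mul_le_mul_of_nonneg_left (hm x hx) ha
  have hy' := mul_le_mul_of_nonneg_left (hm y hy) hb
  simp only [smul_eq_mul] at hx' hy' ⊢
  linear_combination hx' + hy' - (f (a * x + b * y) - m * (a * x + b * y)) * hab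

theorem ConvexOn.sub_supportingLine_le {s : Set ℝ} {f : ℝ → ℝ} {x₀ x m t : ℝ}
    (hf : ConvexOn ℝ s f) (hx₀ : x₀ ∈ s) (hx : x ∈ s)
    (hm : ∀ y ∈ s, f x₀ + m * (y - x₀) ≤ f y) (ht : t ∈ uIcc x₀ x) :
    f t - (f x₀ + m * (t - x₀)) ≤ f x - (f x₀ + m * (x - x₀)) := by
  have hconv : ConvexOn ℝ s fun y => f y - (f x₀ + m * (y - x₀)) :=
    ((hf.add ((LinearMap.mulLeft ℝ (-m)).convexOn hf.1)).add_const (m * x₀ - f x₀)).congr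
      fun y _ => by simp only [Pi.add_apply, LinearMap.mulLeft_apply]; ring
  refine (hconv.le_on_segment hx₀ hx (segment_eq_uIcc x₀ x ▸ ht)).trans (max_le ?_ le_rfl)
  simpa using hm x hx

theorem ConvexOn.comp_neg {s : Set ℝ} {f : ℝ → ℝ} (hf : ConvexOn ℝ s f) :
    ConvexOn ℝ (-s) (fun x => f (-x)) :=
  hf.comp_linearMap (-LinearMap.id)

theorem convexOn_neg_comp_neg_iff {s : Set ℝ} {f : ℝ → ℝ} :
    ConvexOn ℝ (-s) (fun x => -f (-x)) ↔ ConcaveOn ℝ s f := by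
  refine ⟨fun hf => ?_, fun hf => (neg_convexOn_iff.2 hf).comp_neg⟩
  have := hf.comp_neg
  simp only [neg_neg] at this
  exact neg_convexOn_iff.1 this

theorem concaveOn_neg_comp_neg_iff {s : Set ℝ} {f : ℝ → ℝ} :
    ConcaveOn ℝ (-s) (fun x => -f (-x)) ↔ ConvexOn ℝ s f := by
  refine ⟨fun hf => ?_, fun hf => neg_concaveOn_iff.2 hf.comp_neg⟩
  have := hf.neg.comp_neg
  simp only [Pi.neg_apply, neg_neg] at this
  exact this

theorem Convex.monotoneOn_of_hasDerivAt_nonneg {s : Set ℝ} (hs : Convex ℝ s) {u u' : ℝ → ℝ}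
    (hu : ∀ t ∈ s, HasDerivAt u (u' t) t) (hu' : ∀ t ∈ s, 0 ≤ u' t) : MonotoneOn u s :=
  monotoneOn_of_hasDerivWithinAt_nonneg hs (fun t ht => (hu t ht).continuousAt.continuousWithinAt)
    (fun t ht => (hu t (interior_subset ht)).hasDerivWithinAt) fun t ht => hu' t (interior_subset ht)

theorem Convex.antitoneOn_of_hasDerivAt_nonpos {s : Set ℝ} (hs : Convex ℝ s) {u u' : ℝ → ℝ}
    (hu : ∀ t ∈ s, HasDerivAt u (u' t) t) (hu' : ∀ t ∈ s, u' t ≤ 0) : AntitoneOn u s :=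
  antitoneOn_of_hasDerivWithinAt_nonpos hs (fun t ht => (hu t ht).continuousAt.continuousWithinAt)
    (fun t ht => (hu t (interior_subset ht)).hasDerivWithinAt) fun t ht => hu' t (interior_subset ht)

theorem Set.image_neg_comp_neg (F : ℝ → ℝ) (s : Set ℝ) :
    (fun t => -F (-t)) '' (-s) = -(F '' s) := by
  ext; simp [neg_eq_iff_eq_neg]

theorem Set.image_neg_eq_neg_image (F : ℝ → ℝ) (s : Set ℝ) : (-F) '' s = -(F '' s) := by
  ext; simp [neg_eq_iff_eq_neg]

section StrictMonoOn

variable {I : Set ℝ} {F : ℝ → ℝ}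

theorem StrictMonoOn.isOpen_image (hF : StrictMonoOn F I) (hFc : ContinuousOn F I)
    (hI : IsOpen I) : IsOpen (F '' I) := by
  refine isOpen_iff_mem_nhds.2 ?_
  rintro _ ⟨x, hx, rfl⟩
  obtain ⟨a, b, ⟨hax, hxb⟩, hab⟩ := mem_nhds_iff_exists_Ioo_subset.1 (hI.mem_nhds hx)
  obtain ⟨a', ha', hax'⟩ := exists_between hax
  obtain ⟨b', hxb', hb'⟩ := exists_between hxb
  have hsub : Icc a' b' ⊆ I := fun t ht => hab ⟨ha'.trans_le ht.1, ht.2.trans_lt hb'⟩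
  have hIVT := intermediate_value_Icc (hax'.trans hxb').le (hFc.mono hsub)
  refine mem_of_superset (Icc_mem_nhds ?_ ?_) (hIVT.trans (image_mono hsub))
  · exact hF (hsub (left_mem_Icc.2 (hax'.trans hxb').le)) hx hax'
  · exact hF hx (hsub (right_mem_Icc.2 (hax'.trans hxb').le)) hxb'

theorem StrictMonoOn.strictMonoOn_invFunOn (hF : StrictMonoOn F I) :
    StrictMonoOn (invFunOn F I) (F '' I) := by
  rintro _ ⟨a, ha, rfl⟩ _ ⟨b, hb, rfl⟩ hab
  rw [hF.injOn.leftInvOn_invFunOn ha, hF.injOn.leftInvOn_invFunOn hb]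
  exact (hF.lt_iff_lt ha hb).1 hab

theorem StrictMonoOn.continuousAt_invFunOn (hF : StrictMonoOn F I) (hFc : ContinuousOn F I)
    (hI : IsOpen I) {y : ℝ} (hy : y ∈ F '' I) : ContinuousAt (invFunOn F I) y := by
  refine hF.strictMonoOn_invFunOn.continuousAt_of_image_mem_nhds
    ((hF.isOpen_image hFc hI).mem_nhds hy) ?_
  rw [hF.injOn.leftInvOn_invFunOn.image_image]
  exact hI.mem_nhds ((surjOn_image F I).mapsTo_invFunOn hy)

end StrictMonoOn

structure DerivRatioData (I : Set ℝ) (F φ w h H : ℝ → ℝ) : Prop where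
  hasDerivAt : ∀ x ∈ I, HasDerivAt F (φ x) x
  hasDerivAt_deriv : ∀ x ∈ I, HasDerivAt φ (w x) x
  ne_zero : ∀ x ∈ I, w x ≠ 0
  mul_eq : ∀ x ∈ I, h x * w x = φ x
  comp_eq : ∀ x ∈ I, H (F x) = φ x * h x

namespace DerivRatioData

variable {I : Set ℝ} {F φ w h H : ℝ → ℝ}

theorem neg (P : DerivRatioData I F φ w h H) :
    DerivRatioData I (-F) (-φ) (-w) h (fun y => -H (-y)) where
  hasDerivAt x hx := (P.hasDerivAt x hx).neg
  hasDerivAt_deriv x hx := (P.hasDerivAt_deriv x hx).neg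
  ne_zero x hx := neg_ne_zero.2 (P.ne_zero x hx)
  mul_eq x hx := by simp [← P.mul_eq x hx]
  comp_eq x hx := by simp [P.comp_eq x hx]

theorem reflect (P : DerivRatioData I F φ w h H) :
    DerivRatioData (-I) (fun t => -F (-t)) (fun t => φ (-t)) (fun t => -w (-t))
      (fun t => -h (-t)) (fun y => -H (-y)) where
  hasDerivAt t ht := (((P.hasDerivAt (-t) ht).comp t (hasDerivAt_neg t)).neg).congr_deriv (by ring)
  hasDerivAt_deriv t ht := ((P.hasDerivAt_deriv (-t) ht).comp t (hasDerivAt_neg t)).congr_deriv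
    (by ring)
  ne_zero t ht := neg_ne_zero.2 (P.ne_zero (-t) ht)
  mul_eq t ht := by simp [← P.mul_eq (-t) ht]
  comp_eq t ht := by simp [P.comp_eq (-t) ht]

theorem continuousOn (P : DerivRatioData I F φ w h H) : ContinuousOn F I :=
  fun x hx => (P.hasDerivAt x hx).continuousAt.continuousWithinAt

theorem deriv_pos (P : DerivRatioData I F φ w h H) (hI : IsOpen I) (hF : StrictMonoOn F I) :
    ∀ x ∈ I, 0 < φ x := by
  have hφ : ∀ x ∈ I, 0 ≤ φ x := fun x hx =>
    (P.hasDerivAt x hx).hasDerivWithinAt.derivWithin (hI.uniqueDiffWithinAt hx) ▸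
      hF.monotoneOn.derivWithin_nonneg
  intro x hx
  refine (hφ x hx).lt_of_ne fun hφx => P.ne_zero x hx ?_
  have hmin : IsLocalMin φ x := by
    filter_upwards [hI.mem_nhds hx] with y hy
    exact hφx ▸ hφ y hy
  exact hmin.hasDerivAt_eq_zero (P.hasDerivAt_deriv x hx)

theorem inverse (P : DerivRatioData I F φ w h H) (hI : IsOpen I) (hF : StrictMonoOn F I) :
    DerivRatioData (F '' I) (invFunOn F I) (fun y => (φ (invFunOn F I y))⁻¹)
      (fun y => -w (invFunOn F I y) / φ (invFunOn F I y) ^ 3) (-H) (-h) := by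
  set g := invFunOn F I
  have hgI : MapsTo g (F '' I) I := (surjOn_image F I).mapsTo_invFunOn
  have hgF : ∀ x ∈ I, g (F x) = x := fun x hx => hF.injOn.leftInvOn_invFunOn hx
  have hφ : ∀ y ∈ F '' I, φ (g y) ≠ 0 := fun y hy => (P.deriv_pos hI hF _ (hgI hy)).ne'
  have hFc := P.continuousOn
  have hg : ∀ y ∈ F '' I, HasDerivAt g (φ (g y))⁻¹ y := fun y hy =>
    (P.hasDerivAt _ (hgI hy)).of_local_left_inverse (hF.continuousAt_invFunOn hFc hI hy) (hφ y hy)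
      (eventually_of_mem ((hF.isOpen_image hFc hI).mem_nhds hy)
        (surjOn_image F I).rightInvOn_invFunOn)
  refine ⟨hg, fun y hy => ?_, fun y hy => ?_, ?_, ?_⟩
  · refine (((P.hasDerivAt_deriv _ (hgI hy)).comp y (hg y hy)).inv (hφ y hy)).congr_deriv ?_
    rw [comp_apply]
    field_simp
  · exact div_ne_zero (neg_ne_zero.2 (P.ne_zero _ (hgI hy))) (pow_ne_zero _ (hφ y hy))
  · rintro _ ⟨x, hx, rfl⟩
    have hφx := hφ _ (mem_image_of_mem F hx)
    rw [hgF x hx] at hφx ⊢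
    simp only [Pi.neg_apply, P.comp_eq x hx]
    field_simp
    exact P.mul_eq x hx
  · rintro _ ⟨x, hx, rfl⟩
    have hφx := hφ _ (mem_image_of_mem F hx)
    rw [hgF x hx] at hφx ⊢
    simp only [Pi.neg_apply, P.comp_eq x hx]
    field_simp

theorem neg_or_pos (P : DerivRatioData I F φ w h H) (hI : Convex ℝ I) :
    (∀ x ∈ I, w x < 0) ∨ ∀ x ∈ I, 0 < w x :=
  hasDerivWithinAt_forall_lt_or_forall_gt_of_forall_ne hI
    (fun x hx => (P.hasDerivAt_deriv x hx).hasDerivWithinAt) P.ne_zero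

theorem supportingLine_image (P : DerivRatioData I F φ w h H) (hφ : ∀ x ∈ I, 0 < φ x)
    (hh : ConvexOn ℝ I h) {x₀ m : ℝ} (hx₀ : x₀ ∈ I) (hm : ∀ x ∈ I, h x₀ + m * (x - x₀) ≤ h x)
    {x : ℝ} (hx : x ∈ I) : H (F x₀) + (1 + m) * (F x - F x₀) ≤ H (F x) := by
  set D := fun t => h t - (h x₀ + m * (t - x₀)) with hD
  -- The gap to be shown nonnegative is `φ x * D x + (ρ x - ρ x₀) = φ x₀ * D x + (τ x - τ x₀)`,
  -- and `ρ' = -w D`, `τ' = w (D x - D)`.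
  set ρ := fun t => φ t * (h x₀ + m * (t - x₀)) - (1 + m) * F t with hρ
  set τ := fun t => ρ t + D x * φ t with hτ
  have hD₀ : ∀ t ∈ I, 0 ≤ D t := fun t ht => sub_nonneg.2 (hm t ht)
  have hsub : uIcc x₀ x ⊆ I := hh.1.ordConnected.uIcc_subset hx₀ hx
  have hDle : ∀ t ∈ uIcc x₀ x, D t ≤ D x := fun t ht => hh.sub_supportingLine_le hx₀ hx hm ht
  have hρ' : ∀ t ∈ I, HasDerivAt ρ (-(w t * D t)) t := by
    intro t ht
    have hℓ : HasDerivAt (fun t => h x₀ + m * (t - x₀)) m t := by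
      simpa using (((hasDerivAt_id' t).sub_const x₀).const_mul m).const_add (h x₀)
    refine (((P.hasDerivAt_deriv t ht).mul hℓ).sub
      ((P.hasDerivAt t ht).const_mul (1 + m))).congr_deriv ?_
    simp only [hD]
    linear_combination P.mul_eq t ht
  have hτ' : ∀ t ∈ I, HasDerivAt τ (w t * (D x - D t)) t := fun t ht =>
    ((hρ' t ht).add ((P.hasDerivAt_deriv t ht).const_mul (D x))).congr_deriv (by ring)
  have key : ρ x₀ ≤ ρ x ∨ τ x₀ ≤ τ x := by
    have hs : Convex ℝ (uIcc x₀ x) := convex_uIcc x₀ x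
    have hρs : ∀ t ∈ uIcc x₀ x, HasDerivAt ρ (-(w t * D t)) t := fun t ht => hρ' t (hsub ht)
    have hτs : ∀ t ∈ uIcc x₀ x, HasDerivAt τ (w t * (D x - D t)) t := fun t ht => hτ' t (hsub ht)
    have h₀ := left_mem_uIcc (a := x₀) (b := x)
    have h₁ := right_mem_uIcc (a := x₀) (b := x)
    rcases P.neg_or_pos hh.1 with hw | hw <;> rcases le_total x₀ x with hle | hle
    · refine .inl ((hs.monotoneOn_of_hasDerivAt_nonneg hρs fun t ht => ?_) h₀ h₁ hle)
      exact neg_nonneg.2 (mul_nonpos_of_nonpos_of_nonneg (hw t (hsub ht)).le (hD₀ t (hsub ht)))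
    · refine .inr ((hs.antitoneOn_of_hasDerivAt_nonpos hτs fun t ht => ?_) h₁ h₀ hle)
      exact mul_nonpos_of_nonpos_of_nonneg (hw t (hsub ht)).le (sub_nonneg.2 (hDle t ht))
    · refine .inr ((hs.monotoneOn_of_hasDerivAt_nonneg hτs fun t ht => ?_) h₀ h₁ hle)
      exact mul_nonneg (hw t (hsub ht)).le (sub_nonneg.2 (hDle t ht))
    · refine .inl ((hs.antitoneOn_of_hasDerivAt_nonpos hρs fun t ht => ?_) h₁ h₀ hle)
      exact neg_nonpos.2 (mul_nonneg (hw t (hsub ht)).le (hD₀ t (hsub ht)))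
  rw [P.comp_eq x hx, P.comp_eq x₀ hx₀]
  rcases key with hk | hk
  · have := mul_nonneg (hφ x hx).le (hD₀ x hx)
    simp only [hρ, hD] at hk this
    linarith
  · have := mul_nonneg (hφ x₀ hx₀).le (hD₀ x hx)
    simp only [hτ, hρ, hD] at hk this
    linarith

theorem convexOn_image (P : DerivRatioData I F φ w h H) (hI : IsOpen I) (hφ : ∀ x ∈ I, 0 < φ x)
    (hh : ConvexOn ℝ I h) : ConvexOn ℝ (F '' I) H := by
  refine convexOn_of_exists_supportingLine
    (hh.1.isPreconnected.image F P.continuousOn).ordConnected.convex ?_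
  rintro _ ⟨x₀, hx₀, rfl⟩
  obtain ⟨m, hm⟩ := hh.exists_supportingLine (hI.interior_eq.symm ▸ hx₀)
  exact ⟨1 + m, fun _ ⟨x, hx, hy⟩ => hy ▸ P.supportingLine_image hφ hh hx₀ hm hx⟩

theorem concaveOn_image (P : DerivRatioData I F φ w h H) (hI : IsOpen I)
    (hφ : ∀ x ∈ I, 0 < φ x) (hh : ConcaveOn ℝ I h) : ConcaveOn ℝ (F '' I) H := by
  have := P.reflect.convexOn_image hI.neg (fun t ht => hφ (-t) ht)
    (convexOn_neg_comp_neg_iff.2 hh)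
  rw [image_neg_comp_neg] at this
  exact convexOn_neg_comp_neg_iff.1 this

theorem convexOn_image_iff (P : DerivRatioData I F φ w h H) (hI : IsOpen I)
    (hF : StrictMonoOn F I) : ConvexOn ℝ I h ↔ ConvexOn ℝ (F '' I) H := by
  have hφ := P.deriv_pos hI hF
  refine ⟨P.convexOn_image hI hφ, fun hH => ?_⟩
  have := (P.inverse hI hF).concaveOn_image (hF.isOpen_image P.continuousOn hI)
    (fun y hy => inv_pos.2 (hφ _ ((surjOn_image F I).mapsTo_invFunOn hy)))
    (neg_concaveOn_iff.2 hH)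
  rw [hF.injOn.leftInvOn_invFunOn.image_image] at this
  exact neg_concaveOn_iff.1 this

theorem concaveOn_image_iff (P : DerivRatioData I F φ w h H) (hI : IsOpen I)
    (hF : StrictMonoOn F I) : ConcaveOn ℝ I h ↔ ConcaveOn ℝ (F '' I) H := by
  have := P.reflect.convexOn_image_iff hI.neg
    fun a ha b hb hab => neg_lt_neg (hF hb ha (neg_lt_neg hab))
  rwa [image_neg_comp_neg, convexOn_neg_comp_neg_iff, convexOn_neg_comp_neg_iff] at this

theorem convexOn_iff_concaveOn_image (P : DerivRatioData I F φ w h H) (hI : IsOpen I)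
    (hF : StrictAntiOn F I) : ConvexOn ℝ I h ↔ ConcaveOn ℝ (F '' I) H := by
  have := P.neg.convexOn_image_iff hI fun a ha b hb hab => neg_lt_neg (hF ha hb hab)
  rwa [image_neg_eq_neg_image, convexOn_neg_comp_neg_iff] at this

theorem concaveOn_iff_convexOn_image (P : DerivRatioData I F φ w h H) (hI : IsOpen I)
    (hF : StrictAntiOn F I) : ConcaveOn ℝ I h ↔ ConvexOn ℝ (F '' I) H := by
  have := P.neg.concaveOn_image_iff hI fun a ha b hb hab => neg_lt_neg (hF ha hb hab)
  rwa [image_neg_eq_neg_image, concaveOn_neg_comp_neg_iff] at this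

end DerivRatioData

theorem h_H_convexity_correspondence_general
    (I : Set ℝ) (hIopen : IsOpen I)
    (f : ℝ → ℝ) (hf : ContDiffOn ℝ 2 f I)
    (hmono : StrictMonoOn f I ∨ StrictAntiOn f I)
    (hne : ∀ x ∈ I, deriv (deriv f) x ≠ 0)
    (g : ℝ → ℝ) (hg : g = Function.invFunOn f I)
    (h : ℝ → ℝ) (hh : ∀ x ∈ I, h x = deriv f x / deriv (deriv f) x)
    (H : ℝ → ℝ) (hH : ∀ y ∈ f '' I, H y = (deriv f (g y)) ^ 2 / deriv (deriv f) (g y)) :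
    (StrictMonoOn f I →
      ((ConvexOn ℝ I h ↔ ConvexOn ℝ (f '' I) H) ∧
        (ConcaveOn ℝ I h ↔ ConcaveOn ℝ (f '' I) H))) ∧
    (StrictAntiOn f I →
      ((ConvexOn ℝ I h ↔ ConcaveOn ℝ (f '' I) H) ∧
        (ConcaveOn ℝ I h ↔ ConvexOn ℝ (f '' I) H))) := by
  have hinj : InjOn f I := hmono.elim StrictMonoOn.injOn StrictAntiOn.injOn
  have P : DerivRatioData I f (deriv f) (deriv (deriv f)) h H :=
    { hasDerivAt := fun x hx =>
        ((hf.contDiffAt (hIopen.mem_nhds hx)).differentiableAt (by norm_num)).hasDerivAt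
      hasDerivAt_deriv := fun x hx =>
        (((hf.deriv_of_isOpen hIopen (m := 1) (by norm_num)).contDiffAt
          (hIopen.mem_nhds hx)).differentiableAt (by norm_num)).hasDerivAt
      ne_zero := hne
      mul_eq := fun x hx => by rw [hh x hx, div_mul_cancel₀ _ (hne x hx)]
      comp_eq := fun x hx => by
        rw [hH _ (mem_image_of_mem f hx), hg, hinj.leftInvOn_invFunOn hx, hh x hx]
        ring }
  exact ⟨fun hF => ⟨P.convexOn_image_iff hIopen hF, P.concaveOn_image_iff hIopen hF⟩,
    fun hF => ⟨P.convexOn_iff_concaveOn_image hIopen hF, P.concaveOn_iff_convexOn_image hIopen hF⟩⟩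

theorem h_H_convexity_correspondence
    (I : Set ℝ) (hIopen : IsOpen I) (hIconv : Convex ℝ I)
    (f : ℝ → ℝ) (hf : ContDiffOn ℝ 2 f I)
    (hmono : StrictMonoOn f I ∨ StrictAntiOn f I)
    (hne : ∀ x ∈ I, deriv (deriv f) x ≠ 0)
    (g : ℝ → ℝ) (hg : g = Function.invFunOn f I)
    (h : ℝ → ℝ) (hh : ∀ x ∈ I, h x = deriv f x / deriv (deriv f) x)
    (H : ℝ → ℝ) (hH : ∀ y ∈ f '' I, H y = (deriv f (g y)) ^ 2 / deriv (deriv f) (g y)) :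
    (StrictMonoOn f I →
      ((ConvexOn ℝ I h ↔ ConvexOn ℝ (f '' I) H) ∧
        (ConcaveOn ℝ I h ↔ ConcaveOn ℝ (f '' I) H))) ∧
    (StrictAntiOn f I →
      ((ConvexOn ℝ I h ↔ ConcaveOn ℝ (f '' I) H) ∧
        (ConcaveOn ℝ I h ↔ ConvexOn ℝ (f '' I) H))) :=
  h_H_convexity_correspondence_general I hIopen f hf hmono hne g hg h hh H hH
end

section
/- Let I ⊆ ℝ be an open interval and let g : ℝ → ℝ be a function such that: (i) for every x ∈ I there exist C > 0 and δ > 0 with |g(x+t) − g(x)| ≤ C·|t| for all t with |t| < δ and x + t ∈ I (i.e. limsup_{t→0} |g(x+t) − g(x)|/|t| < ∞ at every point of I); and (ii) for Lebesgue-almost every x ∈ I, for every ε > 0 there exists δ > 0 such that |g(x+t) − g(x)| ≤ ε·|t| for all t with |t| < δ and x + t ∈ I (i.e. the limit limsup_{t→0} |g(x+t) − g(x)|/|t| equals 0 at almost every point of I). Then g is constant on I. -/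
open MeasureTheory Set Filter Topology Asymptotics

/-!
Fix `a ≤ b` in `I` and let `N` be the null set of points where `g` need not have derivative `0`.
Covering `N` by open sets `Uₙ` of measure `< 2⁻ⁿ`, the function `S x = ∑ₙ |Uₙ ∩ (-∞, x]|` is
continuous and monotone, and its right slope at every point of `N` is infinite. For each `ε > 0`,
continuous induction along `[a, b]` gives `|g x - g a| ≤ ε (x - a + S x - S a)`: at points off
`N` the increment of `g` is `o(y - x)`, at points of `N` it is `O(y - x)`, which `ε S` outgrows.
Letting `ε → 0` gives `g b = g a`.
-/

section MeasureCDF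

variable {U : Set ℝ} {x y : ℝ}

theorem measureReal_inter_Iic_sub_measureReal_inter_Iic (hU : volume U ≠ ⊤) (hxy : x ≤ y) :
    volume.real (U ∩ Iic y) - volume.real (U ∩ Iic x) = volume.real (U ∩ Ioc x y) := by
  have hsplit := measureReal_inter_add_sdiff (μ := volume) (s := U ∩ Iic y)
    (measurableSet_Iic (a := x)) (measure_ne_top_of_subset inter_subset_left hU)
  rw [inter_assoc, Iic_inter_Iic, min_eq_right hxy, inter_sdiff_assoc, Iic_sdiff_Iic] at hsplit
  linarith

theorem monotone_measureReal_inter_Iic (hU : volume U ≠ ⊤) :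
    Monotone fun x => volume.real (U ∩ Iic x) := fun _ _ h =>
  measureReal_mono (inter_subset_inter_right U (Iic_subset_Iic.2 h))
    (measure_ne_top_of_subset inter_subset_left hU)

theorem measureReal_inter_Iic_sub_le (hU : volume U ≠ ⊤) (hxy : x ≤ y) :
    volume.real (U ∩ Iic y) - volume.real (U ∩ Iic x) ≤ y - x := by
  rw [measureReal_inter_Iic_sub_measureReal_inter_Iic hU hxy, ← Real.volume_real_Ioc_of_le hxy]
  exact measureReal_mono inter_subset_right measure_Ioc_lt_top.ne

theorem measureReal_inter_Iic_sub_of_Ioc_subset (hU : volume U ≠ ⊤) (hxy : x ≤ y)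
    (hsub : Ioc x y ⊆ U) :
    volume.real (U ∩ Iic y) - volume.real (U ∩ Iic x) = y - x := by
  rw [measureReal_inter_Iic_sub_measureReal_inter_Iic hU hxy, inter_eq_right.2 hsub,
    Real.volume_real_Ioc_of_le hxy]

theorem lipschitzWith_one_measureReal_inter_Iic (hU : volume U ≠ ⊤) :
    LipschitzWith 1 fun x => volume.real (U ∩ Iic x) := by
  refine LipschitzWith.of_le_add fun x y => ?_
  rcases le_total x y with hxy | hyx
  · linarith [monotone_measureReal_inter_Iic hU hxy, dist_nonneg (x := x) (y := y)]
  · linarith [measureReal_inter_Iic_sub_le hU hyx, Real.dist_eq x y, le_abs_self (x - y)]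

end MeasureCDF

theorem eventually_nhdsGT_Ioc_subset {α : Type*} [LinearOrder α] [TopologicalSpace α]
    [OrderTopology α] [NoMaxOrder α] {U : Set α} {x : α} (hU : U ∈ 𝓝 x) :
    ∀ᶠ y in 𝓝[>] x, Ioc x y ⊆ U := by
  obtain ⟨u, hxu, hu⟩ := mem_nhdsGE_iff_exists_Ico_subset.1 (nhdsWithin_le_nhds hU)
  filter_upwards [Ioo_mem_nhdsGT hxu] with y hy
  exact fun z hz => hu ⟨hz.1.le, hz.2.trans_lt hy.2⟩

theorem exists_continuous_monotone_tendsto_slope_atTop {N : Set ℝ} (hN : volume N = 0) :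
    ∃ S : ℝ → ℝ, Continuous S ∧ Monotone S ∧ ∀ x ∈ N, Tendsto (slope S x) (𝓝[>] x) atTop := by
  have hcover (n : ℕ) : ∃ U ⊇ N, IsOpen U ∧ volume U < ENNReal.ofReal ((1 / 2) ^ n) :=
    N.exists_isOpen_lt_of_lt _ (by rw [hN]; positivity)
  choose U hNU hUo hUv using hcover
  have hUfin (n : ℕ) : volume (U n) ≠ ⊤ := (hUv n).ne_top
  set F : ℕ → ℝ → ℝ := fun n x => volume.real (U n ∩ Iic x)
  have hF_le (n : ℕ) (x : ℝ) : ‖F n x‖ ≤ (1 / 2) ^ n := by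
    rw [Real.norm_of_nonneg measureReal_nonneg]
    exact ENNReal.toReal_le_of_le_ofReal (by positivity)
      ((measure_mono inter_subset_left).trans (hUv n).le)
  have hF_summable (x : ℝ) : Summable (F · x) :=
    summable_geometric_two.of_norm_bounded (hF_le · x)
  refine ⟨fun x => ∑' n, F n x,
    continuous_tsum (fun n => (lipschitzWith_one_measureReal_inter_Iic (hUfin n)).continuous)
      summable_geometric_two hF_le,
    fun x y hxy => (hF_summable x).tsum_le_tsum
      (fun n => monotone_measureReal_inter_Iic (hUfin n) hxy) (hF_summable y), fun x hx => ?_⟩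
  have hgrowth (m : ℕ) : ∀ᶠ y in 𝓝[>] x, (m : ℝ) ≤ slope (fun x => ∑' n, F n x) x y := by
    have hsub : ∀ᶠ y in 𝓝[>] x, ∀ n ∈ Finset.range m, Ioc x y ⊆ U n :=
      (Finset.range m).eventually_all.2 fun n _ =>
        eventually_nhdsGT_Ioc_subset ((hUo n).mem_nhds (hNU n hx))
    filter_upwards [hsub, self_mem_nhdsWithin] with y hy (hxy : x < y)
    rw [slope_def_field, le_div_iff₀ (sub_pos.2 hxy), ← (hF_summable y).tsum_sub (hF_summable x)]
    calc (m : ℝ) * (y - x) = ∑ n ∈ Finset.range m, (F n y - F n x) := by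
          rw [Finset.sum_congr rfl fun n hn =>
            measureReal_inter_Iic_sub_of_Ioc_subset (hUfin n) hxy.le (hy n hn),
            Finset.sum_const, Finset.card_range, nsmul_eq_mul]
      _ ≤ ∑' n, (F n y - F n x) :=
          ((hF_summable y).sub (hF_summable x)).sum_le_tsum _ fun n _ =>
            sub_nonneg.2 (monotone_measureReal_inter_Iic (hUfin n) hxy.le)
  exact tendsto_atTop.2 fun C => (hgrowth ⌈C⌉₊).mono fun y hy => (Nat.le_ceil C).trans hy

theorem image_le_of_forall_eventually_le_nhdsGT {α β : Type*} [ConditionallyCompleteLinearOrder α]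
    [TopologicalSpace α] [OrderTopology α] [DenselyOrdered α] [TopologicalSpace β] [Preorder β]
    [OrderClosedTopology β] {f B : α → β} {a b : α} (hf : ContinuousOn f (Icc a b))
    (hB : ContinuousOn B (Icc a b)) (ha : f a ≤ B a)
    (hstep : ∀ x ∈ Ico a b, f x ≤ B x → ∀ᶠ y in 𝓝[>] x, f y ≤ B y) :
    ∀ x ∈ Icc a b, f x ≤ B x := by
  have hclosed : IsClosed ({x | f x ≤ B x} ∩ Icc a b) := by
    rw [inter_comm]; exact isClosed_Icc.isClosed_le hf hB
  exact hclosed.Icc_subset_of_forall_mem_nhdsWithin ha fun x hx => hstep x hx.2 hx.1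

theorem continuousAt_of_isBigO_sub {E : Type*} [NormedAddCommGroup E] {g : ℝ → E} {x : ℝ}
    (hg : (fun y => g y - g x) =O[𝓝 x] fun y => y - x) : ContinuousAt g x :=
  tendsto_sub_nhds_zero_iff.1 <| hg.trans_tendsto <| tendsto_sub_nhds_zero_iff.2 tendsto_id

theorem eq_of_isBigO_sub_of_ae_hasDerivAt_zero {g : ℝ → ℝ} {a b : ℝ} (hab : a ≤ b)
    (hO : ∀ x ∈ Icc a b, (fun y => g y - g x) =O[𝓝 x] fun y => y - x)
    (hderiv : ∀ᵐ x, x ∈ Icc a b → HasDerivAt g 0 x) : g b = g a := by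
  set N := {x | ¬(x ∈ Icc a b → HasDerivAt g 0 x)}
  obtain ⟨S, hS_cont, hS_mono, hS_slope⟩ :=
    exists_continuous_monotone_tendsto_slope_atTop (N := N) (ae_iff.1 hderiv)
  have hg_cont : ContinuousOn g (Icc a b) := fun x hx =>
    (continuousAt_of_isBigO_sub (hO x hx)).continuousWithinAt
  set c := b - a + (S b - S a)
  have hbound (ε : ℝ) (hε : 0 < ε) : |g b - g a| ≤ ε * c := by
    refine image_le_of_forall_eventually_le_nhdsGT (f := fun x => |g x - g a|)
      (B := fun x => ε * (x - a + (S x - S a))) ((hg_cont.sub continuousOn_const).abs)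
      (by fun_prop) (by simp) (fun x hx hfx => ?_) b ⟨hab, le_rfl⟩
    have hxab : x ∈ Icc a b := Ico_subset_Icc_self hx
    by_cases hxN : x ∈ N
    · obtain ⟨C, hC⟩ := (hO x hxab).bound
      filter_upwards [nhdsWithin_le_nhds hC, (hS_slope x hxN).eventually_ge_atTop (C / ε),
        self_mem_nhdsWithin] with y hCy hSy (hxy : x < y)
      rw [slope_def_field, div_le_div_iff₀ hε (sub_pos.2 hxy)] at hSy
      rw [Real.norm_eq_abs, Real.norm_eq_abs, abs_of_pos (sub_pos.2 hxy)] at hCy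
      calc |g y - g a| ≤ |g y - g x| + |g x - g a| := abs_sub_le _ _ _
        _ ≤ ε * (y - a + (S y - S a)) := by nlinarith
    · have hx' : HasDerivAt g 0 x := not_not.1 hxN hxab
      filter_upwards [nhdsWithin_le_nhds ((hasDerivAt_iff_isLittleO.1 hx').def hε),
        self_mem_nhdsWithin] with y hy (hxy : x < y)
      rw [smul_zero, sub_zero, Real.norm_eq_abs, Real.norm_eq_abs,
        abs_of_pos (sub_pos.2 hxy)] at hy
      have hSxy := hS_mono hxy.le
      calc |g y - g a| ≤ |g y - g x| + |g x - g a| := abs_sub_le _ _ _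
        _ ≤ ε * (y - a + (S y - S a)) := by nlinarith
  have hc : Tendsto (fun ε => ε * c) (𝓝[>] 0) (𝓝 0) :=
    ((continuous_mul_const c).tendsto' 0 0 (zero_mul c)).mono_left nhdsWithin_le_nhds
  have := ge_of_tendsto hc (eventually_nhdsWithin_of_forall hbound)
  rwa [abs_nonpos_iff, sub_eq_zero] at this

theorem eventually_abs_sub_le_of_forall_abs_lt {g : ℝ → ℝ} {I : Set ℝ} {x C δ : ℝ}
    (hI : I ∈ 𝓝 x) (hδ : 0 < δ)
    (h : ∀ t : ℝ, |t| < δ → x + t ∈ I → |g (x + t) - g x| ≤ C * |t|) :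
    ∀ᶠ y in 𝓝 x, |g y - g x| ≤ C * |y - x| := by
  filter_upwards [hI, Metric.ball_mem_nhds x hδ] with y hyI hyδ
  simpa using h (y - x) hyδ (by simpa using hyI)

theorem constant_of_lipschitz_ae_null_derivative
    (I : Set ℝ) (hIopen : IsOpen I) (hIconv : Convex ℝ I)
    (g : ℝ → ℝ)
    (hlip : ∀ x ∈ I, ∃ C > (0 : ℝ), ∃ δ > (0 : ℝ), ∀ t : ℝ, |t| < δ → x + t ∈ I →
      |g (x + t) - g x| ≤ C * |t|)
    (hae : ∀ᵐ x ∂(volume : Measure ℝ), x ∈ I →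
      ∀ ε > (0 : ℝ), ∃ δ > (0 : ℝ), ∀ t : ℝ, |t| < δ → x + t ∈ I →
        |g (x + t) - g x| ≤ ε * |t|) :
    ∀ x ∈ I, ∀ y ∈ I, g x = g y := by
  have hO : ∀ x ∈ I, (fun y => g y - g x) =O[𝓝 x] fun y => y - x := by
    intro x hx
    obtain ⟨C, -, δ, hδ, h⟩ := hlip x hx
    exact .of_bound C (eventually_abs_sub_le_of_forall_abs_lt (hIopen.mem_nhds hx) hδ h)
  have hderiv : ∀ᵐ x, x ∈ I → HasDerivAt g 0 x := by
    filter_upwards [hae] with x hx hxI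
    refine hasDerivAt_iff_isLittleO.2 (.of_bound fun ε hε => ?_)
    obtain ⟨δ, hδ, h⟩ := hx hxI ε hε
    simpa using eventually_abs_sub_le_of_forall_abs_lt (hIopen.mem_nhds hxI) hδ h
  intro x hx y hy
  wlog hxy : x ≤ y generalizing x y
  · exact (this y hy x hx (le_of_not_ge hxy)).symm
  have hIcc : Icc x y ⊆ I := hIconv.ordConnected.out hx hy
  exact (eq_of_isBigO_sub_of_ae_hasDerivAt_zero hxy (fun z hz => hO z (hIcc hz))
    (hderiv.mono fun z hz hzI => hz (hIcc hzI))).symm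
end

section
/- Let (Ω, 𝔄, P) be a probability space. The geometric mean λ(φ) = exp(∫_Ω ln φ(ω) dP(ω)) is a concave functional on the set of measurable functions bounded away from 0 and ∞: if φ, ψ : Ω → ℝ are measurable with 0 < c ≤ φ(ω) ≤ C and 0 < c ≤ ψ(ω) ≤ C for all ω (for some constants c, C), and s ∈ [0,1], then exp ∫_Ω ln((1−s)φ + sψ) dP ≥ (1−s)·exp ∫_Ω ln φ dP + s·exp ∫_Ω ln ψ dP. -/
/-!
With `A = λ(f)` and `B = λ(g)`, concavity of `log` at the points `f/A`, `g/B` with weights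
`A/(A+B)`, `B/(A+B)` gives pointwise
`log (f + g) - log (A + B) ≥ A/(A+B) (log f - log A) + B/(A+B) (log g - log B)`.
The right side has integral `0`, so `λ` is superadditive; together with the homogeneity
`λ(a f) = a λ(f)` this is concavity.
-/

open MeasureTheory

namespace GeometricMean

variable {Ω : Type*} [MeasurableSpace Ω]

/-- The functional `λ` of the paper. -/
noncomputable def geomMean (P : Measure Ω) (f : Ω → ℝ) : ℝ :=
  Real.exp (∫ ω, Real.log (f ω) ∂P)

lemma weighted_log_div_le_log_add_div_add {a b x y : ℝ} (ha : 0 < a) (hb : 0 < b)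
    (hx : 0 < x) (hy : 0 < y) :
    a / (a + b) * Real.log (x / a) + b / (a + b) * Real.log (y / b) ≤
      Real.log ((x + y) / (a + b)) := by
  have hab : 0 < a + b := add_pos ha hb
  have hsum : a / (a + b) + b / (a + b) = 1 := by field_simp
  have hmix : a / (a + b) * (x / a) + b / (a + b) * (y / b) = (x + y) / (a + b) := by
    field_simp
  simpa only [smul_eq_mul, hmix] using strictConcaveOn_log_Ioi.concaveOn.2
    (Set.mem_Ioi.2 (div_pos hx ha)) (Set.mem_Ioi.2 (div_pos hy hb))
    (div_pos ha hab).le (div_pos hb hab).le hsum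

lemma integrable_log_of_mem_Icc {μ : Measure Ω} [IsFiniteMeasure μ] {f : Ω → ℝ}
    (hf : Measurable f) {c C : ℝ} (hc : 0 < c) (hfb : ∀ ω, f ω ∈ Set.Icc c C) :
    Integrable (fun ω => Real.log (f ω)) μ := by
  refine Integrable.of_bound (Real.measurable_log.comp hf).aestronglyMeasurable
    (max |Real.log c| |Real.log C|) (Filter.Eventually.of_forall fun ω => ?_)
  have hfc : c ≤ f ω := (hfb ω).1
  exact abs_le_max_abs_abs (Real.log_le_log hc hfc)
    (Real.log_le_log (hc.trans_le hfc) (hfb ω).2)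

lemma integrable_log_const_mul {μ : Measure Ω} [IsFiniteMeasure μ] {f : Ω → ℝ}
    (hf : ∀ ω, f ω ≠ 0) (hlog : Integrable (fun ω => Real.log (f ω)) μ) {a : ℝ}
    (ha : a ≠ 0) : Integrable (fun ω => Real.log (a * f ω)) μ := by
  simp_rw [Real.log_mul ha (hf _)]
  exact (integrable_const _).add hlog

variable {P : Measure Ω} [IsProbabilityMeasure P]

lemma integral_log_const_mul {f : Ω → ℝ} (hf : ∀ ω, f ω ≠ 0)
    (hlog : Integrable (fun ω => Real.log (f ω)) P) {a : ℝ} (ha : a ≠ 0) :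
    ∫ ω, Real.log (a * f ω) ∂P = Real.log a + ∫ ω, Real.log (f ω) ∂P := by
  simp_rw [Real.log_mul ha (hf _)]
  rw [integral_add (integrable_const _) hlog, integral_const, probReal_univ, one_smul]

lemma geomMean_const_mul {f : Ω → ℝ} (hf : ∀ ω, f ω ≠ 0)
    (hlog : Integrable (fun ω => Real.log (f ω)) P) {a : ℝ} (ha : 0 < a) :
    geomMean P (fun ω => a * f ω) = a * geomMean P f := by
  rw [geomMean, geomMean, integral_log_const_mul hf hlog ha.ne', Real.exp_add,
    Real.exp_log ha]

lemma geomMean_add_le {f g : Ω → ℝ} (hf : ∀ ω, 0 < f ω) (hg : ∀ ω, 0 < g ω)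
    (hlogf : Integrable (fun ω => Real.log (f ω)) P)
    (hlogg : Integrable (fun ω => Real.log (g ω)) P)
    (hlogfg : Integrable (fun ω => Real.log (f ω + g ω)) P) :
    geomMean P f + geomMean P g ≤ geomMean P (fun ω => f ω + g ω) := by
  set A := geomMean P f
  set B := geomMean P g
  have hA : 0 < A := Real.exp_pos _
  have hB : 0 < B := Real.exp_pos _
  have hpointwise : ∀ ω, A / (A + B) * (Real.log (f ω) - Real.log A) +
      B / (A + B) * (Real.log (g ω) - Real.log B) ≤
        Real.log (f ω + g ω) - Real.log (A + B) := fun ω => by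
    simpa only [Real.log_div (hf ω).ne' hA.ne', Real.log_div (hg ω).ne' hB.ne',
      Real.log_div (add_pos (hf ω) (hg ω)).ne' (add_pos hA hB).ne']
      using weighted_log_div_le_log_add_div_add hA hB (hf ω) (hg ω)
  have hlogA : Real.log A = ∫ ω, Real.log (f ω) ∂P := Real.log_exp _
  have hlogB : Real.log B = ∫ ω, Real.log (g ω) ∂P := Real.log_exp _
  have hintf : Integrable (fun ω => A / (A + B) * (Real.log (f ω) - Real.log A)) P :=
    (hlogf.sub (integrable_const _)).const_mul _
  have hintg : Integrable (fun ω => B / (A + B) * (Real.log (g ω) - Real.log B)) P :=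
    (hlogg.sub (integrable_const _)).const_mul _
  have hintfg : Integrable (fun ω => Real.log (f ω + g ω) - Real.log (A + B)) P :=
    hlogfg.sub (integrable_const _)
  have hintegral := integral_mono (hintf.add hintg) hintfg hpointwise
  simp only [Pi.add_apply] at hintegral
  rw [integral_add hintf hintg, integral_const_mul, integral_const_mul,
    integral_sub hlogf (integrable_const _), integral_sub hlogg (integrable_const _),
    integral_sub hlogfg (integrable_const _)] at hintegral
  simp only [integral_const, probReal_univ, one_smul, ← hlogA, ← hlogB, sub_self, mul_zero,
    add_zero, sub_nonneg] at hintegral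
  calc A + B = Real.exp (Real.log (A + B)) := (Real.exp_log (add_pos hA hB)).symm
    _ ≤ geomMean P (fun ω => f ω + g ω) := Real.exp_le_exp.2 hintegral

end GeometricMean

open GeometricMean

theorem geometric_mean_concave
    {Ω : Type*} [MeasurableSpace Ω] (P : Measure Ω) [IsProbabilityMeasure P]
    (φ ψ : Ω → ℝ) (hφm : Measurable φ) (hψm : Measurable ψ)
    (c C : ℝ) (hc : 0 < c)
    (hφb : ∀ ω, c ≤ φ ω ∧ φ ω ≤ C) (hψb : ∀ ω, c ≤ ψ ω ∧ ψ ω ≤ C)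
    (s : ℝ) (hs0 : 0 ≤ s) (hs1 : s ≤ 1) :
    (1 - s) * Real.exp (∫ ω, Real.log (φ ω) ∂P) +
        s * Real.exp (∫ ω, Real.log (ψ ω) ∂P) ≤
      Real.exp (∫ ω, Real.log ((1 - s) * φ ω + s * ψ ω) ∂P) := by
  rcases hs0.eq_or_lt with rfl | hs0
  · simp
  rcases hs1.eq_or_lt with rfl | hs1
  · simp
  have hφ : ∀ ω, 0 < φ ω := fun ω => hc.trans_le (hφb ω).1
  have hψ : ∀ ω, 0 < ψ ω := fun ω => hc.trans_le (hψb ω).1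
  have hlogφ := integrable_log_of_mem_Icc (μ := P) hφm hc hφb
  have hlogψ := integrable_log_of_mem_Icc (μ := P) hψm hc hψb
  have hlogmix := integrable_log_of_mem_Icc (μ := P) (by fun_prop) hc fun ω =>
    convex_Icc c C (hφb ω) (hψb ω) (sub_nonneg.2 hs1.le) hs0.le (sub_add_cancel 1 s)
  have hsuper := geomMean_add_le (P := P) (fun ω => mul_pos (sub_pos.2 hs1) (hφ ω))
    (fun ω => mul_pos hs0 (hψ ω))
    (integrable_log_const_mul (fun ω => (hφ ω).ne') hlogφ (sub_pos.2 hs1).ne')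
    (integrable_log_const_mul (fun ω => (hψ ω).ne') hlogψ hs0.ne') hlogmix
  rwa [geomMean_const_mul (fun ω => (hφ ω).ne') hlogφ (sub_pos.2 hs1),
    geomMean_const_mul (fun ω => (hψ ω).ne') hlogψ hs0] at hsuper
end
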